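/- arXiv:2311.15304 — 4 statements merged into one kernel-verified Lean document; each statement's English description precedes it below -/
import Mathlib

section
/- Lighthill boundary conditions for the vorticity: if (u₁^ε, u₂^ε) is a C² solution (up to the boundary) of the viscous plane-parallel system with u₁^ε(z) = 0 and u₂^ε(x,z) = 0 at z = 0 and z = 1 for all x, then the vorticity components ω₁^ε = −∂_z u₂^ε, ω₂^ε = d_z u₁^ε, ω₃^ε = ∂_x u₂^ε satisfy, at z = 0 and z = 1: ε ∂_z ω₁^ε = f₂, ε d_z ω₂^ε = −f₁, and ω₃^ε = 0. -/
/-- Partial derivative in `x` of a function of two variables. -/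
noncomputable def pdx (g : ℝ → ℝ → ℝ) (x z : ℝ) : ℝ := deriv (fun x' => g x' z) x

/-- Partial derivative in `z` of a function of two variables. -/
noncomputable def pdz (g : ℝ → ℝ → ℝ) (x z : ℝ) : ℝ := deriv (fun z' => g x z') z

/-!
On a wall `z = z₀` where the velocity vanishes identically in `x`, every tangential derivative
vanishes there too: `∂ₓu₂ = ∂ₓ²u₂ = 0`. Evaluating the equations on the wall then leaves only
the normal second derivatives, `−ε ∂_z²u₂ = f₂` and `−ε d_z²u₁ = f₁`, which are the Lighthill
conditions since `∂_z ω₁ = −∂_z²u₂` and `d_z ω₂ = d_z²u₁`.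
-/

lemma pdx_eq_zero_of_forall_eq_zero {g : ℝ → ℝ → ℝ} {z₀ : ℝ} (h : ∀ x, g x z₀ = 0) (x : ℝ) :
    pdx g x z₀ = 0 := by
  simp only [pdx, h, deriv_const]

lemma pdz_neg (g : ℝ → ℝ → ℝ) (x z : ℝ) : pdz (fun x' z' => -g x' z') x z = -pdz g x z :=
  deriv.neg

lemma eps_mul_pdz_neg_pdz_eq_of_wall {ε : ℝ} {u₁ : ℝ → ℝ} {u₂ f₂ : ℝ → ℝ → ℝ} {z₀ : ℝ}
    (hwall : ∀ x, u₂ x z₀ = 0)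
    (heq : ∀ x, u₂ x z₀ - ε * (pdx (pdx u₂) x z₀ + pdz (pdz u₂) x z₀)
      + u₁ z₀ * pdx u₂ x z₀ = f₂ x z₀) (x : ℝ) :
    ε * pdz (fun x' z' => -(pdz u₂ x' z')) x z₀ = f₂ x z₀ := by
  have hx : ∀ x, pdx u₂ x z₀ = 0 := pdx_eq_zero_of_forall_eq_zero hwall
  have hxx : pdx (pdx u₂) x z₀ = 0 := pdx_eq_zero_of_forall_eq_zero hx x
  have h := heq x
  rw [hwall, hxx, hx] at h
  rw [pdz_neg]
  linarith

lemma eps_mul_deriv_deriv_eq_neg_of_eq_zero {ε : ℝ} {u₁ f₁ : ℝ → ℝ} {z₀ : ℝ} (hwall : u₁ z₀ = 0)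
    (heq : u₁ z₀ - ε * deriv (deriv u₁) z₀ = f₁ z₀) :
    ε * deriv (deriv u₁) z₀ = -f₁ z₀ := by
  linarith

theorem statement6_general (ε : ℝ)
    (f₁ : ℝ → ℝ) (f₂ : ℝ → ℝ → ℝ)
    (u₁ : ℝ → ℝ) (u₂ : ℝ → ℝ → ℝ)
    (heq₁ : ∀ z ∈ Set.Icc (0:ℝ) 1, u₁ z - ε * deriv (deriv u₁) z = f₁ z)
    (heq₂ : ∀ x : ℝ, ∀ z ∈ Set.Icc (0:ℝ) 1,
      u₂ x z - ε * (pdx (pdx u₂) x z + pdz (pdz u₂) x z)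
        + u₁ z * pdx u₂ x z = f₂ x z)
    (hb₁0 : u₁ 0 = 0) (hb₁1 : u₁ 1 = 0)
    (hb₂0 : ∀ x : ℝ, u₂ x 0 = 0) (hb₂1 : ∀ x : ℝ, u₂ x 1 = 0) :
    -- ε ∂_z ω₁ = f₂ at z = 0, 1, where ω₁ = −∂_z u₂
    (∀ x : ℝ, ε * pdz (fun x' z' => -(pdz u₂ x' z')) x 0 = f₂ x 0
      ∧ ε * pdz (fun x' z' => -(pdz u₂ x' z')) x 1 = f₂ x 1)
    -- ε d_z ω₂ = −f₁ at z = 0, 1, where ω₂ = d_z u₁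
    ∧ (ε * deriv (deriv u₁) 0 = -f₁ 0 ∧ ε * deriv (deriv u₁) 1 = -f₁ 1)
    -- ω₃ = 0 at z = 0, 1, where ω₃ = ∂_x u₂
    ∧ (∀ x : ℝ, pdx u₂ x 0 = 0 ∧ pdx u₂ x 1 = 0) := by
  have h0 : (0 : ℝ) ∈ Set.Icc (0:ℝ) 1 := by norm_num
  have h1 : (1 : ℝ) ∈ Set.Icc (0:ℝ) 1 := by norm_num
  refine ⟨fun x => ⟨?_, ?_⟩, ⟨?_, ?_⟩, fun x => ⟨?_, ?_⟩⟩
  · exact eps_mul_pdz_neg_pdz_eq_of_wall hb₂0 (fun x => heq₂ x 0 h0) x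
  · exact eps_mul_pdz_neg_pdz_eq_of_wall hb₂1 (fun x => heq₂ x 1 h1) x
  · exact eps_mul_deriv_deriv_eq_neg_of_eq_zero hb₁0 (heq₁ 0 h0)
  · exact eps_mul_deriv_deriv_eq_neg_of_eq_zero hb₁1 (heq₁ 1 h1)
  · exact pdx_eq_zero_of_forall_eq_zero hb₂0 x
  · exact pdx_eq_zero_of_forall_eq_zero hb₂1 x

/-- Lighthill boundary conditions for the vorticity: for a `C²` (up to the
boundary) solution of the viscous plane-parallel system with `u₁ = u₂ = 0` at `z = 0, 1`,
the vorticity `ω = (−∂_z u₂, d_z u₁, ∂_x u₂)` satisfies, at `z = 0` and `z = 1`,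
`ε ∂_z ω₁ = f₂`, `ε d_z ω₂ = −f₁`, and `ω₃ = 0`. -/
theorem statement6 (L ε : ℝ) (hL : 0 < L) (hε : 0 < ε)
    (f₁ : ℝ → ℝ) (f₂ : ℝ → ℝ → ℝ)
    (hf₁ : Continuous f₁)
    (hf₂ : Continuous (fun p : ℝ × ℝ => f₂ p.1 p.2))
    (hf₂per : ∀ x z : ℝ, f₂ (x + L) z = f₂ x z)
    (u₁ : ℝ → ℝ) (u₂ : ℝ → ℝ → ℝ)
    (hu₁ : ContDiff ℝ 2 u₁)
    (hu₂ : ContDiff ℝ 2 (fun p : ℝ × ℝ => u₂ p.1 p.2))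
    (heq₁ : ∀ z ∈ Set.Icc (0:ℝ) 1, u₁ z - ε * deriv (deriv u₁) z = f₁ z)
    (heq₂ : ∀ x : ℝ, ∀ z ∈ Set.Icc (0:ℝ) 1,
      u₂ x z - ε * (pdx (pdx u₂) x z + pdz (pdz u₂) x z)
        + u₁ z * pdx u₂ x z = f₂ x z)
    (hper : ∀ x z : ℝ, u₂ (x + L) z = u₂ x z)
    (hb₁0 : u₁ 0 = 0) (hb₁1 : u₁ 1 = 0)
    (hb₂0 : ∀ x : ℝ, u₂ x 0 = 0) (hb₂1 : ∀ x : ℝ, u₂ x 1 = 0) :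
    -- ε ∂_z ω₁ = f₂ at z = 0, 1, where ω₁ = −∂_z u₂
    (∀ x : ℝ, ε * pdz (fun x' z' => -(pdz u₂ x' z')) x 0 = f₂ x 0
      ∧ ε * pdz (fun x' z' => -(pdz u₂ x' z')) x 1 = f₂ x 1)
    -- ε d_z ω₂ = −f₁ at z = 0, 1, where ω₂ = d_z u₁
    ∧ (ε * deriv (deriv u₁) 0 = -f₁ 0 ∧ ε * deriv (deriv u₁) 1 = -f₁ 1)
    -- ω₃ = 0 at z = 0, 1, where ω₃ = ∂_x u₂
    ∧ (∀ x : ℝ, pdx u₂ x 0 = 0 ∧ pdx u₂ x 1 = 0) :=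
  statement6_general ε f₁ f₂ u₁ u₂ heq₁ heq₂ hb₁0 hb₁1 hb₂0 hb₂1
end

section
/- If u₁ : [0,1] → ℝ is any C² function satisfying u₁ − ε u₁'' = f₁ on [0,1] with u₁(0) = u₁(1) = 0, then the function ω₃(x,z) := 2π u₁(z) cos(2πx) satisfies ω₃ − ε Δ ω₃ + u₁ ∂_x ω₃ = ∂_x f₂ on ℝ×[0,1], where f₂(x,z) = f₁(z)(1 + sin(2πx)) + 4π²ε u₁(z) sin(2πx) + 2π u₁(z)² cos(2πx); moreover ω₃ is 1-periodic in x and ω₃(x,0) = ω₃(x,1) = 0 for all x. -/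
/-- Laplacian `∂²_x + ∂²_z` of a function of two variables. -/
noncomputable def lap (g : ℝ → ℝ → ℝ) (x z : ℝ) : ℝ :=
  pdx (pdx g) x z + pdz (pdz g) x z

/-- The data `f₂(x,z) = f₁(z)(1+sin 2πx) + 4π²ε u₁(z) sin 2πx + 2π u₁(z)² cos 2πx`. -/
noncomputable def fTwo (ε : ℝ) (f₁ u₁ : ℝ → ℝ) (x z : ℝ) : ℝ :=
  f₁ z * (1 + Real.sin (2 * Real.pi * x))
    + 4 * Real.pi ^ 2 * ε * u₁ z * Real.sin (2 * Real.pi * x)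
    + 2 * Real.pi * (u₁ z) ^ 2 * Real.cos (2 * Real.pi * x)

/-!
Every term is a separated product `a(z) g(x)`, whose partial derivatives are `a(z) g'(x)` and
`a'(z) g(x)`. With `g = cos 2π·` we get `∂ₓ² ω₃ = -4π² ω₃`, so the `ε`-terms of `∂ₓ f₂` absorb
`-ε ∂ₓ² ω₃`, and `ω₃ - ε ∂_z² ω₃ = 2π (u₁ - ε u₁'') cos 2πx = 2π f₁ cos 2πx` is the derivative of
`f₁ (1 + sin 2πx)`. The transport term `u₁ ∂ₓ ω₃` is the derivative of `2π u₁² cos 2πx`.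
-/

open Real

section Separated

variable (a g : ℝ → ℝ) (x z : ℝ)

/- No differentiability is needed: `deriv_const_mul_field'` also covers the junk value `0`. -/
theorem pdx_mul : pdx (fun x z => a z * g x) x z = a z * deriv g x :=
  congrFun (deriv_const_mul_field' (a z)) x

theorem pdz_mul : pdz (fun x z => a z * g x) x z = deriv a z * g x :=
  congrFun (deriv_mul_const_field' (g x)) z

theorem lap_mul :
    lap (fun x z => a z * g x) x z = a z * deriv (deriv g) x + deriv (deriv a) z * g x := by
  have hx : pdx (fun x z => a z * g x) = fun x z => a z * deriv g x := by
    funext x z; exact pdx_mul a g x z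
  have hz : pdz (fun x z => a z * g x) = fun x z => deriv a z * g x := by
    funext x z; exact pdz_mul a g x z
  rw [lap, hx, hz, pdx_mul, pdz_mul]

end Separated

theorem hasDerivAt_sin_mul (k x : ℝ) : HasDerivAt (fun x => sin (k * x)) (k * cos (k * x)) x := by
  simpa [mul_comm] using ((hasDerivAt_id x).const_mul k).sin

theorem hasDerivAt_cos_mul (k x : ℝ) : HasDerivAt (fun x => cos (k * x)) (-k * sin (k * x)) x := by
  simpa [mul_comm] using ((hasDerivAt_id x).const_mul k).cos

theorem deriv_cos_mul (k : ℝ) : deriv (fun x => cos (k * x)) = fun x => -k * sin (k * x) :=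
  funext fun x => (hasDerivAt_cos_mul k x).deriv

theorem deriv_deriv_cos_mul (k x : ℝ) :
    deriv (deriv fun x => cos (k * x)) x = -k ^ 2 * cos (k * x) := by
  rw [deriv_cos_mul, deriv_const_mul_field']
  simp only [(hasDerivAt_sin_mul k x).deriv]
  ring

theorem pdx_fTwo (ε : ℝ) (f₁ u₁ : ℝ → ℝ) (x z : ℝ) :
    pdx (fTwo ε f₁ u₁) x z =
      (f₁ z + 4 * π ^ 2 * ε * u₁ z) * (2 * π * cos (2 * π * x))
        - 2 * π * u₁ z ^ 2 * (2 * π * sin (2 * π * x)) := by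
  have hf₂ := ((((hasDerivAt_sin_mul (2 * π) x).const_add 1).const_mul (f₁ z)).add
    ((hasDerivAt_sin_mul (2 * π) x).const_mul (4 * π ^ 2 * ε * u₁ z))).add
    ((hasDerivAt_cos_mul (2 * π) x).const_mul (2 * π * u₁ z ^ 2))
  exact hf₂.deriv.trans (by ring)

theorem statement11_general (ε : ℝ)
    (f₁ : ℝ → ℝ)
    (u₁ : ℝ → ℝ)
    (heq : ∀ z ∈ Set.Icc (0:ℝ) 1, u₁ z - ε * deriv (deriv u₁) z = f₁ z)
    (hb0 : u₁ 0 = 0) (hb1 : u₁ 1 = 0) :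
    (∀ x : ℝ, ∀ z ∈ Set.Icc (0:ℝ) 1,
      2 * Real.pi * u₁ z * Real.cos (2 * Real.pi * x)
        - ε * lap (fun x' z' => 2 * Real.pi * u₁ z' * Real.cos (2 * Real.pi * x')) x z
        + u₁ z * pdx (fun x' z' => 2 * Real.pi * u₁ z' * Real.cos (2 * Real.pi * x')) x z
      = pdx (fTwo ε f₁ u₁) x z)
    ∧ (∀ x z : ℝ, 2 * Real.pi * u₁ z * Real.cos (2 * Real.pi * (x + 1))
        = 2 * Real.pi * u₁ z * Real.cos (2 * Real.pi * x))
    ∧ (∀ x : ℝ, 2 * Real.pi * u₁ 0 * Real.cos (2 * Real.pi * x) = 0)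
    ∧ (∀ x : ℝ, 2 * Real.pi * u₁ 1 * Real.cos (2 * Real.pi * x) = 0) := by
  refine ⟨fun x z hz => ?_, fun x z => ?_, fun x => by simp [hb0], fun x => by simp [hb1]⟩
  · rw [lap_mul (fun z => 2 * π * u₁ z) (fun x => cos (2 * π * x)),
      pdx_mul (fun z => 2 * π * u₁ z) (fun x => cos (2 * π * x)) x z,
      deriv_const_mul_field', deriv_const_mul_field', deriv_deriv_cos_mul, deriv_cos_mul,
      pdx_fTwo, ← heq z hz]
    ring
  · rw [mul_add, mul_one, cos_add_two_pi]

/-- If `u₁` is `C²` with `u₁ − ε u₁'' = f₁` on `[0,1]` and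
`u₁(0) = u₁(1) = 0`, then `ω₃(x,z) = 2π u₁(z) cos 2πx` satisfies
`ω₃ − ε Δ ω₃ + u₁ ∂_x ω₃ = ∂_x f₂` on `ℝ×[0,1]`; moreover `ω₃` is `1`-periodic in `x`
and vanishes at `z = 0, 1`. -/
theorem statement11 (ε : ℝ) (hε : 0 < ε)
    (f₁ : ℝ → ℝ) (hf₁ : Continuous f₁)
    (u₁ : ℝ → ℝ) (hu₁ : ContDiff ℝ 2 u₁)
    (heq : ∀ z ∈ Set.Icc (0:ℝ) 1, u₁ z - ε * deriv (deriv u₁) z = f₁ z)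
    (hb0 : u₁ 0 = 0) (hb1 : u₁ 1 = 0) :
    (∀ x : ℝ, ∀ z ∈ Set.Icc (0:ℝ) 1,
      2 * Real.pi * u₁ z * Real.cos (2 * Real.pi * x)
        - ε * lap (fun x' z' => 2 * Real.pi * u₁ z' * Real.cos (2 * Real.pi * x')) x z
        + u₁ z * pdx (fun x' z' => 2 * Real.pi * u₁ z' * Real.cos (2 * Real.pi * x')) x z
      = pdx (fTwo ε f₁ u₁) x z)
    ∧ (∀ x z : ℝ, 2 * Real.pi * u₁ z * Real.cos (2 * Real.pi * (x + 1))
        = 2 * Real.pi * u₁ z * Real.cos (2 * Real.pi * x))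
    ∧ (∀ x : ℝ, 2 * Real.pi * u₁ 0 * Real.cos (2 * Real.pi * x) = 0)
    ∧ (∀ x : ℝ, 2 * Real.pi * u₁ 1 * Real.cos (2 * Real.pi * x) = 0) :=
  statement11_general ε f₁ u₁ heq hb0 hb1
end

section
/- One-dimensional vorticity accumulation: let f₁ : [0,1] → ℝ be smooth, and for each ε ∈ (0,1] let u₁^ε be the smooth solution of u₁^ε − ε d²_z u₁^ε = f₁ on (0,1) with u₁^ε(0) = u₁^ε(1) = 0. Then for every continuous function ψ : [0,1] → ℝ, lim_{ε→0⁺} ∫_0¹ d_z u₁^ε(z) ψ(z) dz = ∫_0¹ d_z f₁(z) ψ(z) dz + f₁(0) ψ(0) − f₁(1) ψ(1); that is, the vorticity ω₂^ε = d_z u₁^ε converges weakly-* to d_z f₁ + f₁(0) δ₀ − f₁(1) δ₁ as measures on [0,1]. -/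
open Set Real

noncomputable def expAff (a b : ℝ) : ℝ → ℝ := fun z => Real.exp (a * z + b)

lemma expAff_pos (a b z : ℝ) : 0 < expAff a b z := Real.exp_pos _

lemma hasDerivAt_expAff (a b z : ℝ) :
    HasDerivAt (expAff a b) (a * expAff a b z) z := by
  have h : HasDerivAt (fun z : ℝ => a * z + b) a z := by
    simpa using ((hasDerivAt_id z).const_mul a).add_const b
  unfold expAff
  simpa [mul_comm] using h.exp

lemma contDiff_expAff (a b : ℝ) : ContDiff ℝ (⊤:ℕ∞) (expAff a b) :=
  Real.contDiff_exp.comp ((contDiff_id.const_smul a).add contDiff_const)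

lemma integral_expAff {a : ℝ} (b : ℝ) (ha : a ≠ 0) :
    ∫ z in (0:ℝ)..1, expAff a b z = (expAff a b 1 - expAff a b 0) / a := by
  have h : ∀ z ∈ Set.uIcc (0:ℝ) 1, HasDerivAt (fun z => expAff a b z / a) (expAff a b z) z := by
    intro z _
    have := (hasDerivAt_expAff a b z).div_const a
    simpa [mul_comm, mul_div_assoc, mul_div_cancel_left₀ _ ha] using this
  have := intervalIntegral.integral_eq_sub_of_hasDerivAt h
    ((contDiff_expAff a b).continuous.intervalIntegrable 0 1)
  rw [this]; ring

lemma aux_deriv2_nonneg {g : ℝ → ℝ} (hg : ContDiff ℝ (⊤:ℕ∞) g) {z : ℝ}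
    (h : IsLocalMin g z) : 0 ≤ deriv (deriv g) z := by
  by_contra hneg
  push_neg at hneg
  have hgd : Differentiable ℝ g := hg.differentiable (by simp)
  have hg' : ContDiff ℝ (⊤:ℕ∞) (deriv g) := (contDiff_infty_iff_deriv.mp hg).2
  have hg'd : Differentiable ℝ (deriv g) := hg'.differentiable (by simp)
  have hcont : Continuous (deriv (deriv g)) :=
    ((contDiff_infty_iff_deriv.mp hg').2).continuous
  -- find δ such that deriv (deriv g) < 0 on ball
  obtain ⟨δ, hδ, hball⟩ := Metric.continuous_iff.mp hcont z (-(deriv (deriv g) z)) (by linarith)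
  have hball' : ∀ y ∈ Metric.ball z δ, deriv (deriv g) y < 0 := by
    intro y hy
    have := hball y hy
    rw [Real.dist_eq] at this
    have := abs_lt.mp this
    linarith [this.1, this.2]
  -- deriv g strictly decreasing on ball
  have hanti : StrictAntiOn (deriv g) (Metric.ball z δ) :=
    strictAntiOn_of_deriv_neg (convex_ball z δ) (hg'.continuous.continuousOn)
      (fun x hx => hball' x (by rwa [Metric.isOpen_ball.interior_eq] at hx))
  have hz0 : deriv g z = 0 := h.deriv_eq_zero
  -- deriv g > 0 on (z - δ, z)
  have hpos : ∀ y ∈ Ioo (z - δ) z, 0 < deriv g y := by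
    intro y hy
    have hyb : y ∈ Metric.ball z δ := by
      rw [Metric.mem_ball, Real.dist_eq, abs_lt]; constructor <;> [linarith [hy.1, hy.2]; linarith [hy.1, hy.2]]
    have := hanti hyb (Metric.mem_ball_self hδ) hy.2
    rwa [hz0] at this
  -- g strictly increasing on [z - δ/2, z]
  have hmono : StrictMonoOn g (Icc (z - δ/2) z) := by
    apply strictMonoOn_of_deriv_pos (convex_Icc _ _) hgd.continuous.continuousOn
    intro x hx
    rw [interior_Icc] at hx
    exact hpos x ⟨by linarith [hx.1, hδ], hx.2⟩
  -- contradiction with local min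
  have hf : ∀ᶠ y in nhdsWithin z (Iio z), g z ≤ g y ∧ y ∈ Ioo (z - δ/2) z := by
    apply Filter.Eventually.and
    · exact (h.filter_mono nhdsWithin_le_nhds)
    · exact Ioo_mem_nhdsLT_of_mem ⟨by linarith, le_refl z⟩
  obtain ⟨y, hy1, hy2⟩ := hf.exists
  have : g y < g z := hmono ⟨hy2.1.le, hy2.2.le⟩ ⟨by linarith [hδ], le_refl z⟩ hy2.2
  linarith

lemma aux_min_principle {ε : ℝ} (hε : 0 < ε) {g : ℝ → ℝ} (hg : ContDiff ℝ (⊤:ℕ∞) g)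
    (hin : ∀ z ∈ Set.Icc (0:ℝ) 1, 0 ≤ g z - ε * deriv (deriv g) z)
    (h0 : 0 ≤ g 0) (h1 : 0 ≤ g 1) : ∀ z ∈ Set.Icc (0:ℝ) 1, 0 ≤ g z := by
  obtain ⟨z₀, hz₀, hmin⟩ := isCompact_Icc.exists_isMinOn (Set.nonempty_Icc.mpr zero_le_one)
    (hg.continuous.continuousOn (s := Set.Icc (0:ℝ) 1))
  intro z hz
  by_contra hlt
  push_neg at hlt
  have hgz₀ : g z₀ < 0 := lt_of_le_of_lt (hmin hz) hlt
  have hz₀i : z₀ ∈ Set.Ioo (0:ℝ) 1 := by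
    rcases hz₀.1.lt_or_eq with h | h
    · rcases hz₀.2.lt_or_eq with h' | h'
      · exact ⟨h, h'⟩
      · exact absurd (h' ▸ hgz₀) (not_lt.mpr h1)
    · exact absurd (h ▸ hgz₀) (not_lt.mpr h0)
  have hloc : IsLocalMin g z₀ := by
    apply hmin.isLocalMin
    exact Filter.mem_of_superset (Ioo_mem_nhds hz₀i.1 hz₀i.2) Set.Ioo_subset_Icc_self
  have h2 := aux_deriv2_nonneg hg hloc
  have := hin z₀ hz₀
  nlinarith

lemma aux_barrier {ε : ℝ} (hε : 0 < ε) {c M : ℝ} (hc : 0 ≤ c) (hM : 0 ≤ M)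
    {g : ℝ → ℝ} (hg : ContDiff ℝ (⊤:ℕ∞) g)
    (hin : ∀ z ∈ Set.Icc (0:ℝ) 1, |g z - ε * deriv (deriv g) z| ≤ c)
    (h0 : |g 0| ≤ M) (h1 : |g 1| ≤ M) :
    ∀ z ∈ Set.Icc (0:ℝ) 1,
      |g z| ≤ c + M * (expAff (-(1/Real.sqrt ε)) 0 z
        + expAff (1/Real.sqrt ε) (-(1/Real.sqrt ε)) z) := by
  have hs : 0 < Real.sqrt ε := Real.sqrt_pos.mpr hε
  have hs2 : Real.sqrt ε ^ 2 = ε := Real.sq_sqrt hε.le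
  set s : ℝ := Real.sqrt ε with hs_def
  have hsne : s ≠ 0 := ne_of_gt hs
  have ha₀ : (-(1/s)) * (-(1/s)) = 1/ε := by
    rw [← hs2]; field_simp
  have ha₁ : (1/s) * (1/s) = 1/ε := by
    rw [← hs2]; field_simp
  set E : ℝ → ℝ := fun z => expAff (-(1/s)) 0 z + expAff (1/s) (-(1/s)) z with hE_def
  have key : ∀ h : ℝ → ℝ, ContDiff ℝ (⊤:ℕ∞) h →
      (∀ z ∈ Set.Icc (0:ℝ) 1, -c ≤ h z - ε * deriv (deriv h) z) →
      -M ≤ h 0 → -M ≤ h 1 → ∀ z ∈ Set.Icc (0:ℝ) 1, -(c + M * E z) ≤ h z := by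
    intro h hh hhin hh0 hh1
    set B : ℝ → ℝ := fun z => (c + M * E z) + h z with hB_def
    have hEcd : ContDiff ℝ (⊤:ℕ∞) E := (contDiff_expAff _ _).add (contDiff_expAff _ _)
    have hBcd : ContDiff ℝ (⊤:ℕ∞) B :=
      (contDiff_const.add (hEcd.const_smul M)).add hh
    have hDB : ∀ z, HasDerivAt B
        (M * ((-(1/s)) * expAff (-(1/s)) 0 z + (1/s) * expAff (1/s) (-(1/s)) z) + deriv h z) z := by
      intro z
      have hDE : HasDerivAt E ((-(1/s)) * expAff (-(1/s)) 0 z + (1/s) * expAff (1/s) (-(1/s)) z) z :=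
        (hasDerivAt_expAff (-(1/s)) 0 z).add (hasDerivAt_expAff (1/s) (-(1/s)) z)
      exact ((hDE.const_mul M).const_add c).add
        ((hh.differentiable (by simp)).differentiableAt.hasDerivAt)
    have hderivB : deriv B = fun z =>
        M * ((-(1/s)) * expAff (-(1/s)) 0 z + (1/s) * expAff (1/s) (-(1/s)) z) + deriv h z := by
      funext z; exact (hDB z).deriv
    have hh' : ContDiff ℝ (⊤:ℕ∞) (deriv h) := (contDiff_infty_iff_deriv.mp hh).2
    have hDB2 : ∀ z, deriv (deriv B) z = M * ((1/ε) * E z) + deriv (deriv h) z := by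
      intro z
      rw [hderivB]
      have h1' : HasDerivAt (fun z => M * ((-(1/s)) * expAff (-(1/s)) 0 z + (1/s) * expAff (1/s) (-(1/s)) z))
          (M * ((-(1/s)) * ((-(1/s)) * expAff (-(1/s)) 0 z) + (1/s) * ((1/s) * expAff (1/s) (-(1/s)) z))) z :=
        (((hasDerivAt_expAff (-(1/s)) 0 z).const_mul (-(1/s))).add
          ((hasDerivAt_expAff (1/s) (-(1/s)) z).const_mul (1/s))).const_mul M
      have h2' : HasDerivAt (deriv h) (deriv (deriv h) z) z :=
        ((hh'.differentiable (by simp)).differentiableAt).hasDerivAt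
      rw [HasDerivAt.deriv (f := fun z => M * (-(1/s) * expAff (-(1/s)) 0 z + 1/s * expAff (1/s) (-(1/s)) z) + deriv h z) (h1'.add h2')]
      have : E z = expAff (-(1/s)) 0 z + expAff (1/s) (-(1/s)) z := rfl
      rw [this]
      linear_combination (M * expAff (-(1/s)) 0 z) * ha₀ + (M * expAff (1/s) (-(1/s)) z) * ha₁
    have hBpos := aux_min_principle hε hBcd (by
      intro z hz
      rw [hDB2 z]
      have := hhin z hz
      have hne : ε ≠ 0 := ne_of_gt hε
      have : B z - ε * (M * ((1/ε) * E z) + deriv (deriv h) z)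
          = c + (h z - ε * deriv (deriv h) z) := by
        rw [hB_def]; field_simp; ring
      rw [this]
      linarith [hhin z hz])
      (by
        have hE0 : 1 ≤ E 0 := by
          have h1' : expAff (-(1/s)) 0 0 = 1 := by simp [expAff]
          have h2 := expAff_pos (1/s) (-(1/s)) 0
          have : E 0 = expAff (-(1/s)) 0 0 + expAff (1/s) (-(1/s)) 0 := rfl
          rw [this, h1']; linarith
        have : M ≤ M * E 0 := le_mul_of_one_le_right hM hE0
        show 0 ≤ (c + M * E 0) + h 0
        linarith)
      (by
        have hE1 : 1 ≤ E 1 := by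
          have h1' : expAff (1/s) (-(1/s)) 1 = 1 := by simp [expAff]
          have h2 := expAff_pos (-(1/s)) 0 1
          have : E 1 = expAff (-(1/s)) 0 1 + expAff (1/s) (-(1/s)) 1 := rfl
          rw [this, h1']; linarith
        have : M ≤ M * E 1 := le_mul_of_one_le_right hM hE1
        show 0 ≤ (c + M * E 1) + h 1
        linarith)
    intro z hz
    have := hBpos z hz
    simp only [hB_def] at this
    linarith
  intro z hz
  have hneg : ContDiff ℝ (⊤:ℕ∞) (fun z => -g z) := hg.neg
  have hderivneg : deriv (deriv (fun z => -g z)) = fun z => -(deriv (deriv g) z) := by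
    have h1 : deriv (fun z => -g z) = fun z => -(deriv g z) := by
      funext x; exact deriv.neg
    rw [h1]; funext x; exact deriv.neg
  have k1 := key g hg (fun z hz => by have := hin z hz; have := abs_le.mp this; linarith [this.1])
    (by have := abs_le.mp h0; linarith [this.1]) (by have := abs_le.mp h1; linarith [this.1]) z hz
  have k2 := key (fun z => -g z) hneg (fun z hz => by
      rw [hderivneg]
      have := abs_le.mp (hin z hz)
      simp only []
      linarith [this.2])
    (by have := abs_le.mp h0; linarith [this.2])
    (by have := abs_le.mp h1; linarith [this.2]) z hz
  have hEz : E z = expAff (-(1/s)) 0 z + expAff (1/s) (-(1/s)) z := rfl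
  rw [hEz] at k1 k2
  have k2' : -(c + M * (expAff (-(1/s)) 0 z + expAff (1/s) (-(1/s)) z)) ≤ -g z := k2
  rw [abs_le]
  exact ⟨by linarith, by linarith⟩

lemma aux_barrier_integral {ε : ℝ} (hε : 0 < ε) :
    ∫ z in (0:ℝ)..1, (expAff (-(1/Real.sqrt ε)) 0 z
      + expAff (1/Real.sqrt ε) (-(1/Real.sqrt ε)) z) ≤ 2 * Real.sqrt ε := by
  set s : ℝ := Real.sqrt ε with hs_def
  have hs : 0 < s := Real.sqrt_pos.mpr hε
  have hsne : s ≠ 0 := ne_of_gt hs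
  have hane : -(1/s) ≠ 0 := by simp [hsne]
  have hane' : (1/s) ≠ 0 := by simp [hsne]
  rw [intervalIntegral.integral_add
    ((contDiff_expAff _ _).continuous.intervalIntegrable 0 1)
    ((contDiff_expAff _ _).continuous.intervalIntegrable 0 1),
    integral_expAff _ hane, integral_expAff _ hane']
  have e1 : expAff (-(1/s)) 0 1 = Real.exp (-(1/s)) := by simp [expAff]
  have e2 : expAff (-(1/s)) 0 0 = 1 := by simp [expAff]
  have e3 : expAff (1/s) (-(1/s)) 1 = 1 := by simp [expAff]
  have e4 : expAff (1/s) (-(1/s)) 0 = Real.exp (-(1/s)) := by simp [expAff]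
  rw [e1, e2, e3, e4]
  have hexp : 0 < Real.exp (-(1/s)) := Real.exp_pos _
  have hexp1 : Real.exp (-(1/s)) ≤ 1 := Real.exp_le_one_iff.mpr (neg_nonpos.mpr (le_of_lt (one_div_pos.mpr hs)))
  have : (Real.exp (-(1/s)) - 1) / (-(1/s)) = s * (1 - Real.exp (-(1/s))) := by
    field_simp; ring
  rw [this]
  have : (1 - Real.exp (-(1/s))) / (1/s) = s * (1 - Real.exp (-(1/s))) := by
    field_simp
  rw [this]
  nlinarith

lemma aux_abs_integral {f g : ℝ → ℝ} (hf : ContinuousOn f (Set.Icc 0 1))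
    (hg : ContinuousOn g (Set.Icc 0 1)) (h : ∀ z ∈ Set.Icc (0:ℝ) 1, |f z| ≤ g z) :
    |∫ z in (0:ℝ)..1, f z| ≤ ∫ z in (0:ℝ)..1, g z := by
  have hI : Set.uIcc (0:ℝ) 1 = Set.Icc 0 1 := uIcc_of_le zero_le_one
  have hfi : IntervalIntegrable f MeasureTheory.volume 0 1 :=
    (hf.mono (by rw [hI])).intervalIntegrable
  have hgi : IntervalIntegrable g MeasureTheory.volume 0 1 :=
    (hg.mono (by rw [hI])).intervalIntegrable
  calc |∫ z in (0:ℝ)..1, f z| ≤ ∫ z in (0:ℝ)..1, |f z| :=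
        intervalIntegral.abs_integral_le_integral_abs zero_le_one
    _ ≤ ∫ z in (0:ℝ)..1, g z := by
        apply intervalIntegral.integral_mono_on zero_le_one _ hgi h
        exact hfi.abs

lemma aux_fund {g : ℝ → ℝ} (hg : ContDiff ℝ (⊤:ℕ∞) g) (a b : ℝ) :
    ∫ t in a..b, deriv g t = g b - g a := by
  have hg' : Continuous (deriv g) := (contDiff_infty_iff_deriv.mp hg).2.continuous
  exact intervalIntegral.integral_deriv_eq_sub
    (fun x _ => (hg.differentiable (by simp)).differentiableAt)
    (hg'.intervalIntegrable a b)

lemma aux_deriv_left {g : ℝ → ℝ} (hg : ContDiff ℝ (⊤:ℕ∞) g) {a d W C2 : ℝ} (hd : 0 < d)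
    (hW : ∀ t ∈ Set.Icc a (a+d), |g t| ≤ W)
    (hC : ∀ t ∈ Set.Icc a (a+d), |deriv (deriv g) t| ≤ C2) :
    |deriv g a| ≤ 2*W/d + d*C2/2 := by
  have hg' : ContDiff ℝ (⊤:ℕ∞) (deriv g) := (contDiff_infty_iff_deriv.mp hg).2
  have hg'c : Continuous (deriv g) := hg'.continuous
  -- deriv g t - deriv g a bounded
  have hstep : ∀ t ∈ Set.Icc a (a+d), |deriv g t - deriv g a| ≤ (t - a) * C2 := by
    intro t ht
    have h1 : ∫ x in a..t, deriv (deriv g) x = deriv g t - deriv g a := aux_fund hg' a t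
    rw [← h1]
    calc |∫ x in a..t, deriv (deriv g) x| ≤ ∫ x in a..t, |deriv (deriv g) x| :=
          intervalIntegral.abs_integral_le_integral_abs ht.1
      _ ≤ ∫ _x in a..t, C2 := by
          apply intervalIntegral.integral_mono_on ht.1
          · exact ((contDiff_infty_iff_deriv.mp hg').2.continuous.abs).intervalIntegrable a t
          · exact intervalIntegrable_const
          · intro x hx
            exact hC x ⟨hx.1, le_trans hx.2 ht.2⟩
      _ = (t - a) * C2 := by simp [smul_eq_mul, mul_comm]
  -- main identity
  have hid : ∫ t in a..(a+d), (deriv g t - deriv g a) = (g (a+d) - g a) - d * deriv g a := by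
    rw [intervalIntegral.integral_sub (hg'c.intervalIntegrable _ _) intervalIntegrable_const,
      aux_fund hg a (a+d)]
    simp [smul_eq_mul]
    try ring
  have hbound : |∫ t in a..(a+d), (deriv g t - deriv g a)| ≤ d^2 * C2 / 2 := by
    calc |∫ t in a..(a+d), (deriv g t - deriv g a)|
        ≤ ∫ t in a..(a+d), |deriv g t - deriv g a| :=
          intervalIntegral.abs_integral_le_integral_abs (by linarith)
      _ ≤ ∫ t in a..(a+d), (t - a) * C2 := by
          apply intervalIntegral.integral_mono_on (by linarith)
          · exact ((hg'c.sub continuous_const).abs).intervalIntegrable _ _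
          · exact (((continuous_id.sub continuous_const).mul continuous_const)).intervalIntegrable _ _
          · exact hstep
      _ = d^2 * C2 / 2 := by
          have : ∫ t in a..(a+d), (t - a) * C2
              = (∫ t in a..(a+d), t) * C2 - (∫ _t in a..(a+d), a) * C2 := by
            rw [← sub_mul, ← intervalIntegral.integral_sub
              (intervalIntegral.intervalIntegrable_id) intervalIntegrable_const,
              intervalIntegral.integral_mul_const]
          rw [this, integral_id]
          simp [smul_eq_mul]
          try ring
  have hWa := hW a ⟨le_refl a, by linarith⟩
  have hWad := hW (a+d) ⟨by linarith, le_refl _⟩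
  have h3 : |d * deriv g a| ≤ 2 * W + d^2 * C2/2 := by
    have := abs_sub_abs_le_abs_sub (d * deriv g a) ((g (a+d) - g a))
    have h4 : |d * deriv g a - (g (a+d) - g a)| = |∫ t in a..(a+d), (deriv g t - deriv g a)| := by
      rw [hid]; rw [abs_sub_comm]
    have h5 : |g (a+d) - g a| ≤ 2 * W := by
      calc |g (a+d) - g a| ≤ |g (a+d)| + |g a| := abs_sub _ _
        _ ≤ 2*W := by linarith
    calc |d * deriv g a| ≤ |g (a+d) - g a| + |d * deriv g a - (g (a+d) - g a)| := by
          have := abs_add_le ((g (a+d) - g a)) (d * deriv g a - (g (a+d) - g a))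
          simpa using this
      _ ≤ 2 * W + d^2 * C2/2 := by rw [h4]; linarith [hbound]
  rw [abs_mul, abs_of_pos hd] at h3
  rw [div_add_div _ _ (ne_of_gt hd) two_ne_zero]
  rw [le_div_iff₀ (by positivity)]
  nlinarith [h3]

lemma aux_deriv_right {g : ℝ → ℝ} (hg : ContDiff ℝ (⊤:ℕ∞) g) {b d W C2 : ℝ} (hd : 0 < d)
    (hW : ∀ t ∈ Set.Icc (b-d) b, |g t| ≤ W)
    (hC : ∀ t ∈ Set.Icc (b-d) b, |deriv (deriv g) t| ≤ C2) :
    |deriv g b| ≤ 2*W/d + d*C2/2 := by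
  have hg' : ContDiff ℝ (⊤:ℕ∞) (deriv g) := (contDiff_infty_iff_deriv.mp hg).2
  have hg'c : Continuous (deriv g) := hg'.continuous
  have hstep : ∀ t ∈ Set.Icc (b-d) b, |deriv g b - deriv g t| ≤ (b - t) * C2 := by
    intro t ht
    have h1 : ∫ x in t..b, deriv (deriv g) x = deriv g b - deriv g t := aux_fund hg' t b
    rw [← h1]
    calc |∫ x in t..b, deriv (deriv g) x| ≤ ∫ x in t..b, |deriv (deriv g) x| :=
          intervalIntegral.abs_integral_le_integral_abs ht.2
      _ ≤ ∫ _x in t..b, C2 := by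
          apply intervalIntegral.integral_mono_on ht.2
          · exact ((contDiff_infty_iff_deriv.mp hg').2.continuous.abs).intervalIntegrable t b
          · exact intervalIntegrable_const
          · intro x hx
            exact hC x ⟨le_trans ht.1 hx.1, hx.2⟩
      _ = (b - t) * C2 := by simp [smul_eq_mul, mul_comm]
  have hid : ∫ t in (b-d)..b, (deriv g b - deriv g t) = d * deriv g b - (g b - g (b-d)) := by
    rw [intervalIntegral.integral_sub intervalIntegrable_const (hg'c.intervalIntegrable _ _),
      aux_fund hg (b-d) b]
    simp [smul_eq_mul]
    try ring
  have hbound : |∫ t in (b-d)..b, (deriv g b - deriv g t)| ≤ d^2 * C2 / 2 := by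
    calc |∫ t in (b-d)..b, (deriv g b - deriv g t)|
        ≤ ∫ t in (b-d)..b, |deriv g b - deriv g t| :=
          intervalIntegral.abs_integral_le_integral_abs (by linarith)
      _ ≤ ∫ t in (b-d)..b, (b - t) * C2 := by
          apply intervalIntegral.integral_mono_on (by linarith)
          · exact ((continuous_const.sub hg'c).abs).intervalIntegrable _ _
          · exact (((continuous_const.sub continuous_id).mul continuous_const)).intervalIntegrable _ _
          · exact hstep
      _ = d^2 * C2 / 2 := by
          have : ∫ t in (b-d)..b, (b - t) * C2
              = (∫ _t in (b-d)..b, b) * C2 - (∫ t in (b-d)..b, t) * C2 := by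
            rw [← sub_mul, ← intervalIntegral.integral_sub intervalIntegrable_const
              (intervalIntegral.intervalIntegrable_id),
              intervalIntegral.integral_mul_const]
          rw [this, integral_id]
          simp [smul_eq_mul]
          try ring
  have hWa := hW b ⟨by linarith, le_refl b⟩
  have hWad := hW (b-d) ⟨le_refl _, by linarith⟩
  have h3 : |d * deriv g b| ≤ 2 * W + d^2 * C2/2 := by
    have h5 : |g b - g (b-d)| ≤ 2 * W := by
      calc |g b - g (b-d)| ≤ |g b| + |g (b-d)| := abs_sub _ _
        _ ≤ 2*W := by linarith
    calc |d * deriv g b| ≤ |g b - g (b-d)| + |d * deriv g b - (g b - g (b-d))| := by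
          have := abs_add_le ((g b - g (b-d))) (d * deriv g b - (g b - g (b-d)))
          simpa using this
      _ ≤ 2 * W + d^2 * C2/2 := by rw [← hid]; linarith [hbound]
  rw [abs_mul, abs_of_pos hd] at h3
  rw [div_add_div _ _ (ne_of_gt hd) two_ne_zero]
  rw [le_div_iff₀ (by positivity)]
  nlinarith [h3]

lemma aux_master (f₁ : ℝ → ℝ) (hf₁ : ContDiff ℝ (⊤:ℕ∞) f₁) {K2 K3 A : ℝ}
    (hK2 : ∀ z ∈ Set.Icc (0:ℝ) 1, |deriv (deriv f₁) z| ≤ K2) (hK2' : 0 ≤ K2)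
    (hK3 : ∀ z ∈ Set.Icc (0:ℝ) 1, |deriv (deriv (deriv f₁)) z| ≤ K3) (hK3' : 0 ≤ K3)
    (hA0 : |f₁ 0| ≤ A) (hA1 : |f₁ 1| ≤ A)
    {ε : ℝ} (hε : 0 < ε) (hε1 : ε ≤ 1) {v : ℝ → ℝ} (hv : ContDiff ℝ (⊤:ℕ∞) v)
    (heq : ∀ z ∈ Set.Ioo (0:ℝ) 1, v z - ε * deriv (deriv v) z = f₁ z)
    (h0 : v 0 = 0) (h1 : v 1 = 0) :
    (∀ z ∈ Set.Icc (0:ℝ) 1, |v z - f₁ z| ≤ ε*K2 + A * (expAff (-(1/Real.sqrt ε)) 0 z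
        + expAff (1/Real.sqrt ε) (-(1/Real.sqrt ε)) z)) ∧
    (∀ z ∈ Set.Icc (0:ℝ) 1, |deriv v z - deriv f₁ z| ≤ ε*K3
      + ((5*(K2 + 2*A) + K2)/(2*Real.sqrt ε)) * (expAff (-(1/Real.sqrt ε)) 0 z
        + expAff (1/Real.sqrt ε) (-(1/Real.sqrt ε)) z)) := by
  have hA' : 0 ≤ A := le_trans (abs_nonneg _) hA0
  set s : ℝ := Real.sqrt ε with hs_def
  have hs : 0 < s := Real.sqrt_pos.mpr hε
  have hs1 : s ≤ 1 := by
    rw [hs_def, show (1:ℝ) = Real.sqrt 1 by simp]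
    exact Real.sqrt_le_sqrt hε1
  have hs2 : s ^ 2 = ε := Real.sq_sqrt hε.le
  have hsne : s ≠ 0 := ne_of_gt hs
  -- differentiability bookkeeping
  have hdt : ((⊤:ℕ∞) : WithTop ℕ∞) = ((⊤:ℕ∞) : WithTop ℕ∞) := rfl
  have hv1 : ContDiff ℝ (⊤:ℕ∞) (deriv v) := (contDiff_infty_iff_deriv.mp hv).2
  have hv2 : ContDiff ℝ (⊤:ℕ∞) (deriv (deriv v)) := (contDiff_infty_iff_deriv.mp hv1).2
  have hv3 : ContDiff ℝ (⊤:ℕ∞) (deriv (deriv (deriv v))) := (contDiff_infty_iff_deriv.mp hv2).2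
  have hf1 : ContDiff ℝ (⊤:ℕ∞) (deriv f₁) := (contDiff_infty_iff_deriv.mp hf₁).2
  have hf2 : ContDiff ℝ (⊤:ℕ∞) (deriv (deriv f₁)) := (contDiff_infty_iff_deriv.mp hf1).2
  have hf3 : ContDiff ℝ (⊤:ℕ∞) (deriv (deriv (deriv f₁))) := (contDiff_infty_iff_deriv.mp hf2).2
  have Dv : Differentiable ℝ v := hv.differentiable (by simp)
  have Dv1 : Differentiable ℝ (deriv v) := hv1.differentiable (by simp)
  have Dv2 : Differentiable ℝ (deriv (deriv v)) := hv2.differentiable (by simp)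
  have Df : Differentiable ℝ f₁ := hf₁.differentiable (by simp)
  have Df1 : Differentiable ℝ (deriv f₁) := hf1.differentiable (by simp)
  have Df2 : Differentiable ℝ (deriv (deriv f₁)) := hf2.differentiable (by simp)
  -- extend equation to Icc
  have heqIcc : ∀ z ∈ Set.Icc (0:ℝ) 1, v z - ε * deriv (deriv v) z = f₁ z := by
    have hEq : Set.EqOn (fun z => v z - ε * deriv (deriv v) z) f₁ (Set.Ioo 0 1) :=
      fun z hz => heq z hz
    have hcl := hEq.closure (Continuous.sub Dv.continuous (hv2.continuous.const_smul ε))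
      Df.continuous
    rw [closure_Ioo (by norm_num : (0:ℝ) ≠ 1)] at hcl
    exact fun z hz => hcl hz
  -- the function w
  set w : ℝ → ℝ := fun z => v z - f₁ z with hw_def
  have hw : ContDiff ℝ (⊤:ℕ∞) w := hv.sub hf₁
  have hw1 : deriv w = fun z => deriv v z - deriv f₁ z := by
    funext z; exact deriv_sub (Dv z) (Df z)
  have hw2 : deriv (deriv w) = fun z => deriv (deriv v) z - deriv (deriv f₁) z := by
    rw [hw1]; funext z; exact deriv_sub (Dv1 z) (Df1 z)
  have hwEq : ∀ z ∈ Set.Icc (0:ℝ) 1, w z - ε * deriv (deriv w) z = ε * deriv (deriv f₁) z := by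
    intro z hz
    rw [hw2]
    have := heqIcc z hz
    simp only [hw_def]
    ring_nf
    linarith [this]
  -- barrier for w
  have hbarw : ∀ z ∈ Set.Icc (0:ℝ) 1, |w z| ≤ ε*K2 + A * (expAff (-(1/s)) 0 z
      + expAff (1/s) (-(1/s)) z) := by
    apply aux_barrier hε (mul_nonneg hε.le hK2') hA' hw
    · intro z hz
      rw [hwEq z hz, abs_mul, abs_of_pos hε]
      exact mul_le_mul_of_nonneg_left (hK2 z hz) hε.le
    · simp only [hw_def, h0, zero_sub, abs_neg]; exact hA0
    · simp only [hw_def, h1, zero_sub, abs_neg]; exact hA1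
  constructor
  · exact hbarw
  -- sup bound for w on Icc
  have hexp_le : ∀ z ∈ Set.Icc (0:ℝ) 1, expAff (-(1/s)) 0 z + expAff (1/s) (-(1/s)) z ≤ 2 := by
    intro z hz
    have e1 : expAff (-(1/s)) 0 z ≤ 1 := by
      rw [expAff]; apply Real.exp_le_one_iff.mpr
      simp only [add_zero]
      rw [neg_mul, neg_nonpos]
      exact mul_nonneg (by positivity) hz.1
    have e2 : expAff (1/s) (-(1/s)) z ≤ 1 := by
      rw [expAff]; apply Real.exp_le_one_iff.mpr
      have hz1 : z ≤ 1 := hz.2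
      have : (1/s) * z ≤ (1/s) * 1 := by
        apply mul_le_mul_of_nonneg_left hz1 (by positivity)
      linarith
    linarith
  set W : ℝ := K2 + 2*A with hW_def
  have hWnn : 0 ≤ W := by positivity
  have hsupw : ∀ z ∈ Set.Icc (0:ℝ) 1, |w z| ≤ W := by
    intro z hz
    have := hbarw z hz
    have h2 := hexp_le z hz
    have : |w z| ≤ ε*K2 + A*2 := le_trans this (by nlinarith)
    nlinarith
  -- second derivative bound for w
  have hw2b : ∀ z ∈ Set.Icc (0:ℝ) 1, |deriv (deriv w) z| ≤ (W + K2)/ε := by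
    intro z hz
    have he := hwEq z hz
    have : deriv (deriv w) z = (w z - ε * deriv (deriv f₁) z)/ε := by
      field_simp
      linarith [he]
    rw [this, abs_div, abs_of_pos hε, div_le_div_iff₀ hε hε]
    have h2 : |w z - ε * deriv (deriv f₁) z| ≤ |w z| + ε * |deriv (deriv f₁) z| := by
      calc |w z - ε * deriv (deriv f₁) z| ≤ |w z| + |ε * deriv (deriv f₁) z| := abs_sub _ _
        _ = |w z| + ε * |deriv (deriv f₁) z| := by rw [abs_mul, abs_of_pos hε]
    have h3 := hsupw z hz
    have h4 := hK2 z hz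
    have h5 : ε * |deriv (deriv f₁) z| ≤ ε * K2 := mul_le_mul_of_nonneg_left h4 hε.le
    have h5' : ε * K2 ≤ K2 := by nlinarith
    have h6 : |w z - ε * deriv (deriv f₁) z| ≤ W + K2 := by linarith
    exact mul_le_mul_of_nonneg_right h6 hε.le
  -- boundary derivative bounds
  have hws : ∀ t ∈ Set.Icc (0:ℝ) (0 + s), |w t| ≤ W := by
    intro t ht
    exact hsupw t ⟨ht.1, le_trans ht.2 (by linarith)⟩
  have hw2s : ∀ t ∈ Set.Icc (0:ℝ) (0 + s), |deriv (deriv w) t| ≤ (W + K2)/ε := by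
    intro t ht
    exact hw2b t ⟨ht.1, le_trans ht.2 (by linarith)⟩
  have hd0 : |deriv w 0| ≤ (5*W + K2)/(2*s) := by
    have := aux_deriv_left hw hs hws hw2s
    have harith : 2*W/s + s*((W + K2)/ε)/2 = (5*W+K2)/(2*s) := by
      rw [← hs2]; field_simp; ring
    linarith [this, harith.le]
  have hws' : ∀ t ∈ Set.Icc ((1:ℝ) - s) 1, |w t| ≤ W := by
    intro t ht
    exact hsupw t ⟨by linarith [ht.1], ht.2⟩
  have hw2s' : ∀ t ∈ Set.Icc ((1:ℝ) - s) 1, |deriv (deriv w) t| ≤ (W + K2)/ε := by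
    intro t ht
    exact hw2b t ⟨by linarith [ht.1], ht.2⟩
  have hd1 : |deriv w 1| ≤ (5*W + K2)/(2*s) := by
    have := aux_deriv_right hw hs hws' hw2s'
    have harith : 2*W/s + s*((W + K2)/ε)/2 = (5*W+K2)/(2*s) := by
      rw [← hs2]; field_simp; ring
    linarith [this, harith.le]
  -- equation for p = deriv w on Ioo
  have hpEqIoo : ∀ z ∈ Set.Ioo (0:ℝ) 1,
      deriv v z - ε * deriv (deriv (deriv v)) z = deriv f₁ z := by
    intro z hz
    have hmem : Set.Ioo (0:ℝ) 1 ∈ nhds z := isOpen_Ioo.mem_nhds hz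
    have hfeq : (fun z => v z - ε * deriv (deriv v) z) =ᶠ[nhds z] f₁ :=
      Filter.eventually_of_mem hmem (fun x hx => heq x hx)
    have := hfeq.deriv_eq
    rw [deriv_fun_sub (Dv z) ((Dv2 z).const_mul ε), deriv_const_mul ε (Dv2 z)] at this
    exact this
  -- p and its equation on Icc
  have hp2 : deriv (deriv (deriv w)) = fun z =>
      deriv (deriv (deriv v)) z - deriv (deriv (deriv f₁)) z := by
    rw [hw2]; funext z; exact deriv_sub (Dv2 z) (Df2 z)
  have hpEq : ∀ z ∈ Set.Icc (0:ℝ) 1,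
      deriv w z - ε * deriv (deriv (deriv w)) z = ε * deriv (deriv (deriv f₁)) z := by
    have hEq : Set.EqOn (fun z => deriv w z - ε * deriv (deriv (deriv w)) z)
        (fun z => ε * deriv (deriv (deriv f₁)) z) (Set.Ioo 0 1) := by
      intro z hz
      have hioo := hpEqIoo z hz
      have e1 : deriv (deriv (deriv w)) z
          = deriv (deriv (deriv v)) z - deriv (deriv (deriv f₁)) z := by rw [hp2]
      have e2 : deriv w z = deriv v z - deriv f₁ z := by rw [hw1]
      show deriv w z - ε * deriv (deriv (deriv w)) z = ε * deriv (deriv (deriv f₁)) z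
      rw [e1, e2]
      linarith [hioo]
    have hcl := hEq.closure
      (Continuous.sub (hw1 ▸ (Dv1.continuous.sub Df1.continuous) :
          Continuous (deriv w))
        ((hp2 ▸ (hv3.continuous.sub hf3.continuous) :
          Continuous (deriv (deriv (deriv w)))).const_smul ε))
      (hf3.continuous.const_smul ε)
    rw [closure_Ioo (by norm_num : (0:ℝ) ≠ 1)] at hcl
    exact fun z hz => hcl hz
  -- barrier for p
  have hwd : ContDiff ℝ (⊤:ℕ∞) (deriv w) := (contDiff_infty_iff_deriv.mp hw).2
  have hbarp := aux_barrier hε (c := ε*K3) (M := (5*W+K2)/(2*s)) (by positivity)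
    (by positivity) hwd
    (by
      intro z hz
      rw [hpEq z hz, abs_mul, abs_of_pos hε]
      exact mul_le_mul_of_nonneg_left (hK3 z hz) hε.le)
    hd0 hd1
  intro z hz
  have := hbarp z hz
  rw [hw1] at this
  simp only [hW_def] at this
  convert this using 2

lemma aux_int_const_add (c m : ℝ) {E : ℝ → ℝ} (hE : Continuous E) :
    ∫ z in (0:ℝ)..1, (c + m * E z) = c + m * ∫ z in (0:ℝ)..1, E z := by
  rw [intervalIntegral.integral_add intervalIntegrable_const
      ((hE.intervalIntegrable 0 1).const_mul m),
    intervalIntegral.integral_const_mul]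
  simp

set_option maxHeartbeats 2000000 in
/-- One-dimensional vorticity accumulation: if for each `ε ∈ (0,1]`,
`u ε` is a smooth solution of `u − ε u'' = f₁` on `(0,1)` with `u(0) = u(1) = 0`, then
for every continuous `ψ : [0,1] → ℝ`,
`lim_{ε→0⁺} ∫₀¹ d_z u^ε(z) ψ(z) dz = ∫₀¹ d_z f₁(z) ψ(z) dz + f₁(0) ψ(0) − f₁(1) ψ(1)`;
i.e. `ω₂^ε = d_z u^ε` converges weakly-* to `d_z f₁ + f₁(0) δ₀ − f₁(1) δ₁`. -/
theorem statement18 (f₁ : ℝ → ℝ) (hf₁ : ContDiff ℝ (⊤ : ℕ∞) f₁)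
    (u : ℝ → ℝ → ℝ)
    (hsm : ∀ ε ∈ Set.Ioc (0:ℝ) 1, ContDiff ℝ (⊤ : ℕ∞) (u ε))
    (heq : ∀ ε ∈ Set.Ioc (0:ℝ) 1, ∀ z ∈ Set.Ioo (0:ℝ) 1,
      u ε z - ε * deriv (deriv (u ε)) z = f₁ z)
    (hb0 : ∀ ε ∈ Set.Ioc (0:ℝ) 1, u ε 0 = 0)
    (hb1 : ∀ ε ∈ Set.Ioc (0:ℝ) 1, u ε 1 = 0)
    (ψ : ℝ → ℝ) (hψ : ContinuousOn ψ (Set.Icc 0 1)) :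
    Filter.Tendsto
      (fun ε : ℝ => ∫ z in (0:ℝ)..1, deriv (u ε) z * ψ z)
      (nhdsWithin 0 (Set.Ioc 0 1))
      (nhds ((∫ z in (0:ℝ)..1, deriv f₁ z * ψ z) + f₁ 0 * ψ 0 - f₁ 1 * ψ 1)) := by
  have hf : ContDiff ℝ (⊤:ℕ∞) f₁ := hf₁.of_le (by simp)
  have hf1 : ContDiff ℝ (⊤:ℕ∞) (deriv f₁) := (contDiff_infty_iff_deriv.mp hf).2
  have hf2 : ContDiff ℝ (⊤:ℕ∞) (deriv (deriv f₁)) := (contDiff_infty_iff_deriv.mp hf1).2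
  have hf3 : ContDiff ℝ (⊤:ℕ∞) (deriv (deriv (deriv f₁))) := (contDiff_infty_iff_deriv.mp hf2).2
  have Df : Differentiable ℝ f₁ := hf.differentiable (by simp)
  -- constants
  obtain ⟨K1', hK1'⟩ := isCompact_Icc.exists_bound_of_continuousOn
    (s := Set.Icc (0:ℝ) 1) hf1.continuous.continuousOn
  obtain ⟨K2', hK2'⟩ := isCompact_Icc.exists_bound_of_continuousOn
    (s := Set.Icc (0:ℝ) 1) hf2.continuous.continuousOn
  obtain ⟨K3', hK3'⟩ := isCompact_Icc.exists_bound_of_continuousOn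
    (s := Set.Icc (0:ℝ) 1) hf3.continuous.continuousOn
  set K1 : ℝ := max K1' 0 with hK1_def
  set K2 : ℝ := max K2' 0 with hK2_def
  set K3 : ℝ := max K3' 0 with hK3_def
  have hK1nn : 0 ≤ K1 := le_max_right _ _
  have hK2nn : 0 ≤ K2 := le_max_right _ _
  have hK3nn : 0 ≤ K3 := le_max_right _ _
  have hK1 : ∀ z ∈ Set.Icc (0:ℝ) 1, |deriv f₁ z| ≤ K1 :=
    fun z hz => le_trans (by simpa [Real.norm_eq_abs] using hK1' z hz) (le_max_left _ _)
  have hK2 : ∀ z ∈ Set.Icc (0:ℝ) 1, |deriv (deriv f₁) z| ≤ K2 :=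
    fun z hz => le_trans (by simpa [Real.norm_eq_abs] using hK2' z hz) (le_max_left _ _)
  have hK3 : ∀ z ∈ Set.Icc (0:ℝ) 1, |deriv (deriv (deriv f₁)) z| ≤ K3 :=
    fun z hz => le_trans (by simpa [Real.norm_eq_abs] using hK3' z hz) (le_max_left _ _)
  set A : ℝ := max |f₁ 0| |f₁ 1| with hA_def
  have hA0 : |f₁ 0| ≤ A := le_max_left _ _
  have hA1 : |f₁ 1| ≤ A := le_max_right _ _
  have hAnn : 0 ≤ A := le_trans (abs_nonneg _) hA0
  set W : ℝ := K2 + 2*A with hW_def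
  have hWnn : 0 ≤ W := by positivity
  set CT : ℝ := K1 + K3 + (5*W + K2) with hCT_def
  have hCTnn : 0 ≤ CT := by positivity
  rw [Metric.tendsto_nhdsWithin_nhds]
  intro η hη
  -- polynomial approximation
  set δ : ℝ := η/(3*(CT + K1 + 2*A + 1)) with hδ_def
  have hδpos : 0 < δ := by positivity
  obtain ⟨P, hP⟩ := exists_polynomial_near_of_continuousOn 0 1 ψ hψ δ hδpos
  set φ : ℝ → ℝ := fun x => P.eval x with hφ_def
  have hφcont : Continuous φ := P.continuous
  have hφ'cont : Continuous fun x => P.derivative.eval x := P.derivative.continuous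
  obtain ⟨Cφ', hCφ'⟩ := isCompact_Icc.exists_bound_of_continuousOn
    (s := Set.Icc (0:ℝ) 1) hφ'cont.continuousOn
  set Cφ : ℝ := max Cφ' 0 with hCφ_def
  have hCφnn : 0 ≤ Cφ := le_max_right _ _
  have hCφ : ∀ z ∈ Set.Icc (0:ℝ) 1, |P.derivative.eval z| ≤ Cφ :=
    fun z hz => le_trans (by simpa [Real.norm_eq_abs] using hCφ' z hz) (le_max_left _ _)
  set r : ℝ := η/(3*(Cφ+1)*(K2+2*A+1)) with hr_def
  have hrpos : 0 < r := by positivity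
  refine ⟨min 1 (r^2), by positivity, ?_⟩
  intro ε hεIoc hdist
  have hε : 0 < ε := hεIoc.1
  have hε1 : ε ≤ 1 := hεIoc.2
  rw [Real.dist_eq, sub_zero, abs_of_pos hε] at hdist
  have hεr2 : ε < r^2 := lt_of_lt_of_le hdist (min_le_right _ _)
  -- the master estimates
  have husm : ContDiff ℝ (⊤:ℕ∞) (u ε) := (hsm ε hεIoc).of_le (by simp)
  obtain ⟨hm1, hm2⟩ := aux_master f₁ hf hK2 hK2nn hK3 hK3nn hA0 hA1 hε hε1 husm
    (heq ε hεIoc) (hb0 ε hεIoc) (hb1 ε hεIoc)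
  set s : ℝ := Real.sqrt ε with hs_def
  have hs : 0 < s := Real.sqrt_pos.mpr hε
  have hsne : s ≠ 0 := ne_of_gt hs
  have hs2 : s^2 = ε := Real.sq_sqrt hε.le
  have hsr : s < r := by
    have := Real.sqrt_lt_sqrt hε.le hεr2
    rwa [Real.sqrt_sq hrpos.le] at this
  have hs1 : s ≤ 1 := by
    rw [hs_def, show (1:ℝ) = Real.sqrt 1 by simp]
    exact Real.sqrt_le_sqrt hε1
  have hεs : ε ≤ s := by
    rw [← hs2, pow_two]
    exact mul_le_of_le_one_right hs.le hs1
  -- barrier function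
  set Ebar : ℝ → ℝ := fun z => expAff (-(1/s)) 0 z + expAff (1/s) (-(1/s)) z with hEbar_def
  have hEc : Continuous Ebar :=
    ((contDiff_expAff _ _).continuous).add ((contDiff_expAff _ _).continuous)
  have hEint : ∫ z in (0:ℝ)..1, Ebar z ≤ 2*s := aux_barrier_integral hε
  have hEintnn : 0 ≤ ∫ z in (0:ℝ)..1, Ebar z := by
    apply intervalIntegral.integral_nonneg zero_le_one
    intro x _
    exact (add_pos (expAff_pos _ _ _) (expAff_pos _ _ _)).le
  set M : ℝ := (5*W + K2)/(2*s) with hM_def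
  have hMnn : 0 ≤ M := by positivity
  have hM2s : M * (2*s) = 5*W + K2 := by rw [hM_def]; field_simp
  -- u ε facts
  have hu'c : Continuous (deriv (u ε)) := (contDiff_infty_iff_deriv.mp husm).2.continuous
  have hDu : Differentiable ℝ (u ε) := husm.differentiable (by simp)
  have hf1c : Continuous (deriv f₁) := hf1.continuous
  -- integration by parts
  have hIBP1 := intervalIntegral.integral_mul_deriv_eq_deriv_mul
    (u := u ε) (v := φ) (u' := fun x => deriv (u ε) x) (v' := fun x => P.derivative.eval x)
    (fun x _ => (hDu x).hasDerivAt) (fun x _ => P.hasDerivAt x)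
    (hu'c.intervalIntegrable 0 1) (hφ'cont.intervalIntegrable 0 1)
  rw [hb0 ε hεIoc, hb1 ε hεIoc] at hIBP1
  simp only [zero_mul, sub_zero, zero_sub] at hIBP1
  have hIBP2 := intervalIntegral.integral_mul_deriv_eq_deriv_mul
    (u := f₁) (v := φ) (u' := fun x => deriv f₁ x) (v' := fun x => P.derivative.eval x)
    (fun x _ => (Df x).hasDerivAt) (fun x _ => P.hasDerivAt x)
    (hf1c.intervalIntegrable 0 1) (hφ'cont.intervalIntegrable 0 1)
  -- abbreviations
  set I : ℝ := ∫ z in (0:ℝ)..1, deriv (u ε) z * ψ z with hI_def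
  set Iφ : ℝ := ∫ z in (0:ℝ)..1, deriv (u ε) z * φ z with hIφ_def
  set T : ℝ := (∫ z in (0:ℝ)..1, deriv f₁ z * ψ z) + f₁ 0 * ψ 0 - f₁ 1 * ψ 1 with hT_def
  set Tφ : ℝ := (∫ z in (0:ℝ)..1, deriv f₁ z * φ z) + f₁ 0 * φ 0 - f₁ 1 * φ 1 with hTφ_def
  -- Step B : |Iφ - Tφ| < η/3
  have hBdiff : Iφ - Tφ = ∫ z in (0:ℝ)..1, (f₁ z - u ε z) * P.derivative.eval z := by
    have e1 : Iφ = -∫ z in (0:ℝ)..1, u ε z * P.derivative.eval z := by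
      rw [hIφ_def]; linarith [hIBP1]
    have hsplit : ∫ z in (0:ℝ)..1, (f₁ z - u ε z) * P.derivative.eval z
        = (∫ z in (0:ℝ)..1, f₁ z * P.derivative.eval z)
          - ∫ z in (0:ℝ)..1, u ε z * P.derivative.eval z := by
      rw [← intervalIntegral.integral_sub (f := fun z => f₁ z * P.derivative.eval z)
        (g := fun z => u ε z * P.derivative.eval z)
        ((Df.continuous.mul hφ'cont).intervalIntegrable 0 1)
        ((hDu.continuous.mul hφ'cont).intervalIntegrable 0 1)]
      congr 1
      funext z
      ring
    rw [e1, hTφ_def, hsplit]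
    linarith [hIBP2]
  have hBabs : |Iφ - Tφ| ≤ Cφ*(ε*K2) + (Cφ*A) * ∫ z in (0:ℝ)..1, Ebar z := by
    rw [hBdiff, ← aux_int_const_add (Cφ*(ε*K2)) (Cφ*A) hEc]
    apply aux_abs_integral
    · exact (Df.continuous.sub hDu.continuous).continuousOn.mul hφ'cont.continuousOn
    · exact (continuous_const.add (continuous_const.mul hEc)).continuousOn
    · intro z hz
      rw [abs_mul]
      have e1 : |f₁ z - u ε z| ≤ ε*K2 + A * Ebar z := by
        rw [abs_sub_comm]; exact hm1 z hz
      have e2 := hCφ z hz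
      have hEnn : 0 ≤ Ebar z := (add_pos (expAff_pos _ _ _) (expAff_pos _ _ _)).le
      calc |f₁ z - u ε z| * |P.derivative.eval z| ≤ (ε*K2 + A * Ebar z) * Cφ := by
            apply mul_le_mul e1 e2 (abs_nonneg _) (by positivity)
        _ = Cφ*(ε*K2) + Cφ*A * Ebar z := by ring
  have hr3 : (Cφ+1)*(K2+2*A+1)*r = η/3 := by
    have hne : (Cφ+1)*(K2+2*A+1) ≠ 0 := by positivity
    rw [hr_def]
    field_simp
  have hstepB : |Iφ - Tφ| < η/3 := by
    have h2 : (Cφ*A) * ∫ z in (0:ℝ)..1, Ebar z ≤ Cφ*A*(2*s) :=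
      mul_le_mul_of_nonneg_left hEint (by positivity)
    have h3 : Cφ*(ε*K2) ≤ Cφ*(s*K2) :=
      mul_le_mul_of_nonneg_left (mul_le_mul_of_nonneg_right hεs hK2nn) hCφnn
    have h4 : Cφ*(s*K2) + Cφ*A*(2*s) ≤ (Cφ+1)*(K2+2*A+1)*s := by
      have hcoef : Cφ*K2 + Cφ*(2*A) ≤ (Cφ+1)*(K2+2*A+1) := by
        have hexp : (Cφ+1)*(K2+2*A+1) - (Cφ*K2 + Cφ*(2*A)) = Cφ + K2 + 2*A + 1 := by ring
        linarith [hCφnn, hK2nn, hAnn]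
      have := mul_le_mul_of_nonneg_right hcoef hs.le
      calc Cφ*(s*K2) + Cφ*A*(2*s) = (Cφ*K2 + Cφ*(2*A))*s := by ring
        _ ≤ (Cφ+1)*(K2+2*A+1)*s := this
    have h5 : (Cφ+1)*(K2+2*A+1)*s < (Cφ+1)*(K2+2*A+1)*r := by
      apply mul_lt_mul_of_pos_left hsr (by positivity)
    linarith
  -- Step C : |I - Iφ| ≤ δ * CT
  have hCdiff : I - Iφ = ∫ z in (0:ℝ)..1, deriv (u ε) z * (ψ z - φ z) := by
    rw [hI_def, hIφ_def, ← intervalIntegral.integral_sub]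
    · congr 1; funext z; ring
    · apply ContinuousOn.intervalIntegrable
      rw [uIcc_of_le zero_le_one]
      exact hu'c.continuousOn.mul hψ
    · exact (hu'c.mul hφcont).intervalIntegrable 0 1
  have hCabs : |I - Iφ| ≤ δ*(K1 + ε*K3) + (δ*M) * ∫ z in (0:ℝ)..1, Ebar z := by
    rw [hCdiff, ← aux_int_const_add (δ*(K1 + ε*K3)) (δ*M) hEc]
    apply aux_abs_integral
    · exact hu'c.continuousOn.mul (hψ.sub hφcont.continuousOn)
    · exact (continuous_const.add (continuous_const.mul hEc)).continuousOn
    · intro z hz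
      rw [abs_mul]
      have hEnn : 0 ≤ Ebar z := (add_pos (expAff_pos _ _ _) (expAff_pos _ _ _)).le
      have e1 : |deriv (u ε) z| ≤ K1 + (ε*K3 + M * Ebar z) := by
        have := hm2 z hz
        have h2 := hK1 z hz
        calc |deriv (u ε) z| ≤ |deriv f₁ z| + |deriv (u ε) z - deriv f₁ z| := by
              have := abs_add_le (deriv f₁ z) (deriv (u ε) z - deriv f₁ z)
              simpa using this
          _ ≤ K1 + (ε*K3 + M * Ebar z) := by
              apply add_le_add h2
              exact this
      have e2 : |ψ z - φ z| ≤ δ := by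
        have := hP z hz
        rw [abs_sub_comm]
        linarith [this]
      calc |deriv (u ε) z| * |ψ z - φ z| ≤ (K1 + (ε*K3 + M * Ebar z)) * δ := by
            apply mul_le_mul e1 e2 (abs_nonneg _) (by positivity)
        _ = δ*(K1 + ε*K3) + δ*M * Ebar z := by ring
  have hδη : δ*(CT + K1 + 2*A + 1) = η/3 := by
    rw [hδ_def]
    have hne : CT + K1 + 2*A + 1 ≠ 0 := by positivity
    field_simp
  have hstepC : |I - Iφ| < η/3 := by
    have h2 : (δ*M) * ∫ z in (0:ℝ)..1, Ebar z ≤ δ*M*(2*s) :=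
      mul_le_mul_of_nonneg_left hEint (by positivity)
    have h3 : δ*M*(2*s) = δ*(5*W + K2) := by
      rw [mul_assoc, hM2s]
    have h4 : δ*(K1 + ε*K3) ≤ δ*(K1 + K3) := by
      apply mul_le_mul_of_nonneg_left _ hδpos.le
      have : ε*K3 ≤ K3 := mul_le_of_le_one_left hK3nn hε1
      linarith
    have h5 : δ*(K1+K3) + δ*(5*W+K2) = δ*CT := by rw [hCT_def]; ring
    have h6 : δ*CT < δ*(CT + K1 + 2*A + 1) := by
      apply mul_lt_mul_of_pos_left _ hδpos
      linarith
    linarith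
  -- Step D : |Tφ - T| < η/3
  have hDdiff : Tφ - T = (∫ z in (0:ℝ)..1, deriv f₁ z * (φ z - ψ z))
      + f₁ 0 * (φ 0 - ψ 0) - f₁ 1 * (φ 1 - ψ 1) := by
    rw [hTφ_def, hT_def]
    have : ∫ z in (0:ℝ)..1, deriv f₁ z * (φ z - ψ z)
        = (∫ z in (0:ℝ)..1, deriv f₁ z * φ z) - ∫ z in (0:ℝ)..1, deriv f₁ z * ψ z := by
      have hint : IntervalIntegrable (fun z => deriv f₁ z * ψ z) MeasureTheory.volume 0 1 := by
        apply ContinuousOn.intervalIntegrable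
        rw [uIcc_of_le zero_le_one]
        exact hf1c.continuousOn.mul hψ
      rw [← intervalIntegral.integral_sub (f := fun z => deriv f₁ z * φ z) (g := fun z => deriv f₁ z * ψ z) ((hf1c.mul hφcont).intervalIntegrable 0 1) hint]
      congr 1; funext z; ring
    rw [this]; ring
  have hstepD : |Tφ - T| < η/3 := by
    have h1' : |∫ z in (0:ℝ)..1, deriv f₁ z * (φ z - ψ z)| ≤ K1 * δ := by
      have := aux_abs_integral (f := fun z => deriv f₁ z * (φ z - ψ z))
        (g := fun _ => K1 * δ)
        (hf1c.continuousOn.mul (hφcont.continuousOn.sub hψ)) continuousOn_const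
        (by
          intro z hz
          rw [abs_mul]
          apply mul_le_mul (hK1 z hz) (le_of_lt (hP z hz)) (abs_nonneg _) hK1nn)
      simpa using this
    have h2' : |f₁ 0 * (φ 0 - ψ 0)| ≤ A * δ := by
      rw [abs_mul]
      apply mul_le_mul hA0 (le_of_lt (hP 0 (by norm_num))) (abs_nonneg _) hAnn
    have h3' : |f₁ 1 * (φ 1 - ψ 1)| ≤ A * δ := by
      rw [abs_mul]
      apply mul_le_mul hA1 (le_of_lt (hP 1 (by norm_num))) (abs_nonneg _) hAnn
    have habs : |Tφ - T| ≤ K1*δ + A*δ + A*δ := by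
      rw [hDdiff]
      calc |(∫ z in (0:ℝ)..1, deriv f₁ z * (φ z - ψ z)) + f₁ 0 * (φ 0 - ψ 0)
            - f₁ 1 * (φ 1 - ψ 1)|
          ≤ |(∫ z in (0:ℝ)..1, deriv f₁ z * (φ z - ψ z)) + f₁ 0 * (φ 0 - ψ 0)|
            + |f₁ 1 * (φ 1 - ψ 1)| := abs_sub _ _
        _ ≤ |∫ z in (0:ℝ)..1, deriv f₁ z * (φ z - ψ z)| + |f₁ 0 * (φ 0 - ψ 0)|
            + |f₁ 1 * (φ 1 - ψ 1)| := by
            have := abs_add_le (∫ z in (0:ℝ)..1, deriv f₁ z * (φ z - ψ z)) (f₁ 0 * (φ 0 - ψ 0))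
            linarith
        _ ≤ K1*δ + A*δ + A*δ := by linarith
    have h6 : δ*(K1 + 2*A) < δ*(CT + K1 + 2*A + 1) := by
      apply mul_lt_mul_of_pos_left _ hδpos
      linarith
    calc |Tφ - T| ≤ K1*δ + A*δ + A*δ := habs
      _ = δ*(K1 + 2*A) := by ring
      _ < δ*(CT + K1 + 2*A + 1) := h6
      _ = η/3 := hδη
  -- conclusion
  rw [Real.dist_eq]
  have : I - T = (I - Iφ) + (Iφ - Tφ) + (Tφ - T) := by ring
  calc |I - T| ≤ |I - Iφ| + |Iφ - Tφ| + |Tφ - T| := by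
        rw [this]
        have h1'' := abs_add_le ((I - Iφ) + (Iφ - Tφ)) (Tφ - T)
        have h2'' := abs_add_le (I - Iφ) (Iφ - Tφ)
        linarith
    _ < η/3 + η/3 + η/3 := by linarith
    _ = η := by ring
end

section
/- There exists a constant κ > 0, depending only on f₁ (but not on ε), such that for every ε ∈ (0,1] and every smooth solution u₁^ε of the two-point boundary value problem u₁^ε − ε d²_z u₁^ε = f₁ on (0,1) with u₁^ε(0) = u₁^ε(1) = 0, one has ‖u₁^ε − f₁‖_{L²(0,1)} ≤ κ ε^{1/4}. -/
lemma second_deriv_nonneg_of_isLocalMin {f : ℝ → ℝ}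
    (hf : ContDiff ℝ ((⊤:ℕ∞) : WithTop ℕ∞) f) {a : ℝ}
    (hmin : IsLocalMin f a) : 0 ≤ deriv (deriv f) a := by
  by_contra h
  push_neg at h
  have htop : ((⊤:ℕ∞) : WithTop ℕ∞) ≠ 0 := by simp
  have hdiff : Differentiable ℝ f := hf.differentiable htop
  have hf' : ContDiff ℝ ((⊤:ℕ∞) : WithTop ℕ∞) (deriv f) := (contDiff_infty_iff_deriv.mp hf).2
  have hd0 : deriv f a = 0 := hmin.deriv_eq_zero
  have hda : HasDerivAt (deriv f) (deriv (deriv f) a) a :=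
    ((hf'.differentiable htop) a).hasDerivAt
  have hslope : Filter.Tendsto (slope (deriv f) a) (nhdsWithin a {a}ᶜ)
      (nhds (deriv (deriv f) a)) := hasDerivAt_iff_tendsto_slope.mp hda
  have hneg : ∀ᶠ x in nhdsWithin a {a}ᶜ, slope (deriv f) a x < 0 :=
    hslope.eventually (gt_mem_nhds h)
  have hle : nhdsWithin a (Set.Ioi a) ≤ nhdsWithin a {a}ᶜ :=
    nhdsWithin_mono a (fun x hx => ne_of_gt hx)
  have hmin' : ∀ᶠ x in nhdsWithin a (Set.Ioi a), f a ≤ f x :=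
    (hmin.filter_mono (nhdsWithin_le_nhds))
  have hev : ∀ᶠ x in nhdsWithin a (Set.Ioi a),
      slope (deriv f) a x < 0 ∧ f a ≤ f x := (hneg.filter_mono hle).and hmin'
  obtain ⟨b, hb, hsub⟩ := mem_nhdsGT_iff_exists_Ioo_subset.mp hev
  set c := (a + b) / 2 with hc
  have hac : a < c := by simp only [hc]; linarith [hb.out]
  have hcb : c < b := by simp only [hc]; linarith [hb.out]
  have hderivneg : ∀ x ∈ Set.Ioo a c, deriv f x < 0 := by
    intro x hx
    have hx' : x ∈ Set.Ioo a b := ⟨hx.1, hx.2.trans hcb⟩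
    have := (hsub hx').1
    rw [slope_def_field, hd0, sub_zero] at this
    have hxa : 0 < x - a := by linarith [hx.1]
    have := div_neg_iff.mp this
    rcases this with ⟨h1, h2⟩ | ⟨h1, h2⟩
    · linarith
    · exact h1
  have hanti : StrictAntiOn f (Set.Icc a c) := by
    apply strictAntiOn_of_deriv_neg (convex_Icc a c) (hdiff.continuous.continuousOn)
    intro x hx
    rw [interior_Icc] at hx
    exact hderivneg x hx
  have hlt : f c < f a := hanti (Set.left_mem_Icc.mpr hac.le) (Set.right_mem_Icc.mpr hac.le) hac
  have hge : f a ≤ f c := (hsub ⟨hac, hcb⟩).2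
  linarith

lemma expAff_hasDerivAt (c d z : ℝ) :
    HasDerivAt (fun z => Real.exp (c*z+d)) (Real.exp (c*z+d) * c) z := by
  have h : HasDerivAt (fun z : ℝ => c*z+d) c z := by
    simpa using ((hasDerivAt_id z).const_mul c).add_const d
  exact h.exp

lemma expAff_contDiff (c d : ℝ) :
    ContDiff ℝ ((⊤:ℕ∞) : WithTop ℕ∞) (fun z => Real.exp (c*z+d)) :=
  Real.contDiff_exp.comp ((contDiff_id.const_smul c).add contDiff_const)

lemma expAff_integral (k d : ℝ) (hk : k ≠ 0) :
    ∫ z in (0:ℝ)..1, Real.exp (k*z+d) = (Real.exp (k+d) - Real.exp d) / k := by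
  have h : ∀ x ∈ Set.uIcc (0:ℝ) 1, HasDerivAt (fun z => Real.exp (k*z+d) / k)
      (Real.exp (k*x+d)) x := by
    intro x _
    have := (expAff_hasDerivAt k d x).div_const k
    simpa [mul_div_assoc, mul_comm, mul_div_cancel_left₀ _ hk] using this
  have hint : IntervalIntegrable (fun z => Real.exp (k*z+d)) MeasureTheory.volume 0 1 :=
    (Real.continuous_exp.comp (by continuity)).intervalIntegrable 0 1
  have := intervalIntegral.integral_eq_sub_of_hasDerivAt h hint
  rw [this]
  ring_nf

lemma deriv2_sub {g h : ℝ → ℝ} (hg : ContDiff ℝ ((⊤:ℕ∞) : WithTop ℕ∞) g)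
    (hh : ContDiff ℝ ((⊤:ℕ∞) : WithTop ℕ∞) h) (z : ℝ) :
    deriv (deriv (fun z => g z - h z)) z = deriv (deriv g) z - deriv (deriv h) z := by
  have htop : ((⊤:ℕ∞) : WithTop ℕ∞) ≠ 0 := by simp
  have hg1 : Differentiable ℝ g := hg.differentiable htop
  have hh1 : Differentiable ℝ h := hh.differentiable htop
  have hg2 : Differentiable ℝ (deriv g) :=
    ((contDiff_infty_iff_deriv.mp hg).2).differentiable htop
  have hh2 : Differentiable ℝ (deriv h) :=
    ((contDiff_infty_iff_deriv.mp hh).2).differentiable htop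
  have h1 : deriv (fun z => g z - h z) = fun z => deriv g z - deriv h z :=
    funext fun z => deriv_sub (hg1 z) (hh1 z)
  rw [h1, deriv_fun_sub (hg2 z) (hh2 z)]

lemma deriv2_add {g h : ℝ → ℝ} (hg : ContDiff ℝ ((⊤:ℕ∞) : WithTop ℕ∞) g)
    (hh : ContDiff ℝ ((⊤:ℕ∞) : WithTop ℕ∞) h) (z : ℝ) :
    deriv (deriv (fun z => g z + h z)) z = deriv (deriv g) z + deriv (deriv h) z := by
  have htop : ((⊤:ℕ∞) : WithTop ℕ∞) ≠ 0 := by simp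
  have hg1 : Differentiable ℝ g := hg.differentiable htop
  have hh1 : Differentiable ℝ h := hh.differentiable htop
  have hg2 : Differentiable ℝ (deriv g) :=
    ((contDiff_infty_iff_deriv.mp hg).2).differentiable htop
  have hh2 : Differentiable ℝ (deriv h) :=
    ((contDiff_infty_iff_deriv.mp hh).2).differentiable htop
  have h1 : deriv (fun z => g z + h z) = fun z => deriv g z + deriv h z :=
    funext fun z => deriv_add (hg1 z) (hh1 z)
  rw [h1, deriv_fun_add (hg2 z) (hh2 z)]
lemma max_principle (v : ℝ → ℝ) (hv : ContDiff ℝ ((⊤:ℕ∞) : WithTop ℕ∞) v)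
    (ε : ℝ) (hε : 0 < ε)
    (hineq : ∀ z ∈ Set.Ioo (0:ℝ) 1, 0 ≤ v z - ε * deriv (deriv v) z)
    (h0 : 0 ≤ v 0) (h1 : 0 ≤ v 1) : ∀ z ∈ Set.Icc (0:ℝ) 1, 0 ≤ v z := by
  have htop : ((⊤:ℕ∞) : WithTop ℕ∞) ≠ 0 := by simp
  obtain ⟨z₀, hz₀, hmin⟩ := isCompact_Icc.exists_isMinOn (Set.nonempty_Icc.mpr zero_le_one)
    ((hv.differentiable htop).continuous.continuousOn : ContinuousOn v (Set.Icc 0 1))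
  intro z hz
  rcases le_or_gt 0 (v z₀) with hpos | hneg
  · exact hpos.trans (hmin hz)
  · exfalso
    have hz₀0 : z₀ ≠ 0 := fun h => by rw [h] at hneg; linarith
    have hz₀1 : z₀ ≠ 1 := fun h => by rw [h] at hneg; linarith
    have hz₀' : z₀ ∈ Set.Ioo (0:ℝ) 1 :=
      ⟨lt_of_le_of_ne hz₀.1 (Ne.symm hz₀0), lt_of_le_of_ne hz₀.2 hz₀1⟩
    have hloc : IsLocalMin v z₀ := hmin.isLocalMin (Icc_mem_nhds hz₀'.1 hz₀'.2)
    have h2 := second_deriv_nonneg_of_isLocalMin hv hloc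
    have := hineq z₀ hz₀'
    nlinarith


set_option maxHeartbeats 1000000 in
/-- There is `κ > 0` depending only on `f₁` such that for every
`ε ∈ (0,1]` and every smooth solution `u₁^ε` of `u − ε u'' = f₁` on `(0,1)` with
`u(0) = u(1) = 0`, one has `‖u₁^ε − f₁‖_{L²(0,1)} ≤ κ ε^{1/4}`. -/
theorem statement19 (f₁ : ℝ → ℝ) (hf₁ : ContDiff ℝ (⊤ : ℕ∞) f₁) :
    ∃ κ > 0, ∀ ε ∈ Set.Ioc (0:ℝ) 1, ∀ u₁ : ℝ → ℝ, ContDiff ℝ (⊤ : ℕ∞) u₁ →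
      (∀ z ∈ Set.Ioo (0:ℝ) 1, u₁ z - ε * deriv (deriv u₁) z = f₁ z) →
      u₁ 0 = 0 → u₁ 1 = 0 →
      Real.sqrt (∫ z in (0:ℝ)..1, (u₁ z - f₁ z) ^ 2) ≤ κ * ε ^ ((1:ℝ)/4) := by
  have htop : ((⊤:ℕ∞) : WithTop ℕ∞) ≠ 0 := by simp
  have hf : ContDiff ℝ ((⊤:ℕ∞) : WithTop ℕ∞) f₁ := hf₁.of_le (by simp)
  have hfc : Continuous f₁ := (hf.differentiable htop).continuous
  have hf'' : ContDiff ℝ ((⊤:ℕ∞) : WithTop ℕ∞) (deriv (deriv f₁)) :=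
    (contDiff_infty_iff_deriv.mp (contDiff_infty_iff_deriv.mp hf).2).2
  have hf''c : Continuous (deriv (deriv f₁)) := (hf''.differentiable htop).continuous
  obtain ⟨C₁, hC₁⟩ := isCompact_Icc.exists_bound_of_continuousOn
    (hfc.continuousOn : ContinuousOn f₁ (Set.Icc 0 1))
  obtain ⟨C₂, hC₂⟩ := isCompact_Icc.exists_bound_of_continuousOn
    (hf''c.continuousOn : ContinuousOn (deriv (deriv f₁)) (Set.Icc 0 1))
  set M : ℝ := max C₁ C₂ + 1 with hMdef
  have hM1 : 1 ≤ M := by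
    simp only [hMdef]
    nlinarith [(abs_nonneg (f₁ 0)).trans (hC₁ 0 (by norm_num : (0:ℝ) ∈ Set.Icc (0:ℝ) 1)),
      le_max_left C₁ C₂]
  have hMf : ∀ z ∈ Set.Icc (0:ℝ) 1, |f₁ z| ≤ M := fun z hz =>
    (hC₁ z hz).trans (by simp only [hMdef]; nlinarith [le_max_left C₁ C₂])
  have hMf'' : ∀ z ∈ Set.Icc (0:ℝ) 1, |deriv (deriv f₁) z| ≤ M := fun z hz =>
    (hC₂ z hz).trans (by simp only [hMdef]; nlinarith [le_max_right C₁ C₂])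
  refine ⟨3*M, by linarith, ?_⟩
  rintro ε ⟨hε, hε1⟩ u hu₁ hequ hu0 hu1
  have hu : ContDiff ℝ ((⊤:ℕ∞) : WithTop ℕ∞) u := hu₁.of_le (by simp)
  have huc : Continuous u := (hu.differentiable htop).continuous
  set s := Real.sqrt ε with hsdef
  have hs : 0 < s := Real.sqrt_pos.mpr hε
  have hsε : s * s = ε := Real.mul_self_sqrt hε.le
  have hs1 : s ≤ 1 := by rw [hsdef]; exact Real.sqrt_le_one.mpr hε1
  set E1 : ℝ → ℝ := fun z => Real.exp ((-1/s)*z + 0) with hE1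
  set E2 : ℝ → ℝ := fun z => Real.exp ((1/s)*z + (-1/s)) with hE2
  set B : ℝ → ℝ := fun z => M * (E1 z + E2 z + ε) with hB
  have hBcd : ContDiff ℝ ((⊤:ℕ∞) : WithTop ℕ∞) B :=
    contDiff_const.mul (((expAff_contDiff _ _).add (expAff_contDiff _ _)).add contDiff_const)
  -- second derivative of B
  have hB1 : ∀ z, HasDerivAt B (M * (E1 z * (-1/s) + E2 z * (1/s))) z := fun z => by
    exact (((expAff_hasDerivAt (-1/s) 0 z).add (expAff_hasDerivAt (1/s) (-1/s) z)).add_const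
      ε).const_mul M
  have hderivB : deriv B = fun z => M * (E1 z * (-1/s) + E2 z * (1/s)) :=
    funext fun z => (hB1 z).deriv
  have hss1 : (-1/s) * (-1/s) = 1/ε := by rw [← hsε]; field_simp; try ring
  have hss2 : (1/s) * (1/s) = 1/ε := by rw [← hsε]; field_simp; try ring
  have hderivB2 : ∀ z, deriv (deriv B) z = M * (E1 z * (1/ε) + E2 z * (1/ε)) := by
    intro z
    have h1 := (expAff_hasDerivAt (-1/s) 0 z).mul_const (-1/s)
    have h2 := (expAff_hasDerivAt (1/s) (-1/s) z).mul_const (1/s)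
    have h3 := ((h1.add h2).const_mul M).deriv
    simp only [Pi.add_apply] at h3
    rw [hderivB]
    simp only [hE1, hE2]
    rw [h3, mul_assoc (Real.exp ((-1/s)*z + 0)), mul_assoc (Real.exp ((1/s)*z + (-1/s))),
      hss1, hss2]
  have hBeq : ∀ z, B z - ε * deriv (deriv B) z = M * ε := by
    intro z
    rw [hderivB2, hB]
    field_simp
    ring
  -- w and its second derivative
  set w : ℝ → ℝ := fun z => u z - f₁ z with hwdef
  have hwc : ContDiff ℝ ((⊤:ℕ∞) : WithTop ℕ∞) w := hu.sub hf
  have hw2 : ∀ z ∈ Set.Ioo (0:ℝ) 1, w z - ε * deriv (deriv w) z = ε * deriv (deriv f₁) z := by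
    intro z hz
    have heq := hequ z hz
    have hd : deriv (deriv w) z = deriv (deriv u) z - deriv (deriv f₁) z := deriv2_sub hu hf z
    simp only [hwdef, hd]
    ring_nf
    nlinarith [heq]
  have hE10 : E1 0 = 1 := by simp [hE1]
  have hE21 : E2 1 = 1 := by
    have h0 : (1/s)*1 + (-1/s) = 0 := by ring
    rw [hE2]; show Real.exp ((1/s)*1 + (-1/s)) = 1; rw [h0, Real.exp_zero]
  have hE20 : 0 < E2 0 := Real.exp_pos _
  have hE11 : 0 < E1 1 := Real.exp_pos _
  have hM0 : (0:ℝ) ≤ M := by linarith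
  have hf0 := abs_le.mp (hMf 0 (by norm_num))
  have hf1 := abs_le.mp (hMf 1 (by norm_num))
  -- upper barrier
  have hub : ∀ z ∈ Set.Icc (0:ℝ) 1, w z ≤ B z := by
    have key := max_principle (fun z => B z - w z) (hBcd.sub hwc) ε hε ?_ ?_ ?_
    · intro z hz
      have hk : 0 ≤ B z - w z := key z hz
      linarith
    · intro z hz
      have hd : deriv (deriv (fun z => B z - w z)) z = deriv (deriv B) z - deriv (deriv w) z :=
        deriv2_sub hBcd hwc z
      rw [hd]
      show 0 ≤ B z - w z - ε * (deriv (deriv B) z - deriv (deriv w) z)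
      have h1 := hBeq z
      have h2 := hw2 z hz
      have h3 := abs_le.mp (hMf'' z (Set.mem_Icc_of_Ioo hz))
      nlinarith
    · show 0 ≤ B 0 - w 0
      have hp : 0 ≤ M * (E2 0 + ε) := mul_nonneg hM0 (by linarith)
      simp only [hwdef, hB, hu0, hE10]
      nlinarith
    · show 0 ≤ B 1 - w 1
      have hp : 0 ≤ M * (E1 1 + ε) := mul_nonneg hM0 (by linarith)
      simp only [hwdef, hB, hu1, hE21]
      nlinarith
  -- lower barrier
  have hlb : ∀ z ∈ Set.Icc (0:ℝ) 1, -(B z) ≤ w z := by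
    have key := max_principle (fun z => B z + w z) (hBcd.add hwc) ε hε ?_ ?_ ?_
    · intro z hz
      have hk : 0 ≤ B z + w z := key z hz
      linarith
    · intro z hz
      have hd : deriv (deriv (fun z => B z + w z)) z = deriv (deriv B) z + deriv (deriv w) z :=
        deriv2_add hBcd hwc z
      rw [hd]
      show 0 ≤ B z + w z - ε * (deriv (deriv B) z + deriv (deriv w) z)
      have h1 := hBeq z
      have h2 := hw2 z hz
      have h3 := abs_le.mp (hMf'' z (Set.mem_Icc_of_Ioo hz))
      nlinarith
    · show 0 ≤ B 0 + w 0
      have hp : 0 ≤ M * (E2 0 + ε) := mul_nonneg hM0 (by linarith)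
      simp only [hwdef, hB, hu0, hE10]
      nlinarith
    · show 0 ≤ B 1 + w 1
      have hp : 0 ≤ M * (E1 1 + ε) := mul_nonneg hM0 (by linarith)
      simp only [hwdef, hB, hu1, hE21]
      nlinarith
  -- integral estimates
  set G : ℝ → ℝ := fun z =>
    3*M^2*(Real.exp ((-2/s)*z + 0) + Real.exp ((2/s)*z + (-2/s)) + ε^2) with hG
  have hBG : ∀ z ∈ Set.Icc (0:ℝ) 1, (w z)^2 ≤ G z := by
    intro z hz
    have h1 : (w z)^2 ≤ (B z)^2 := sq_le_sq' (by linarith [hlb z hz]) (hub z hz)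
    have hE1sq : E1 z ^ 2 = Real.exp ((-2/s)*z + 0) := by
      simp only [hE1, sq, ← Real.exp_add]; ring_nf
    have hE2sq : E2 z ^ 2 = Real.exp ((2/s)*z + (-2/s)) := by
      simp only [hE2, sq, ← Real.exp_add]; ring_nf
    have h2 : (B z)^2 ≤ G z := by
      simp only [hB, hG, ← hE1sq, ← hE2sq]
      nlinarith [sq_nonneg (M*(E1 z - E2 z)), sq_nonneg (M*(E1 z - ε)), sq_nonneg (M*(E2 z - ε))]
    linarith
  have hwint : IntervalIntegrable (fun z => (w z)^2) MeasureTheory.volume 0 1 :=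
    (((huc.sub hfc).pow 2)).intervalIntegrable 0 1
  have hcont1 : Continuous (fun z : ℝ => Real.exp ((-2/s)*z + 0)) :=
    Real.continuous_exp.comp ((continuous_const.mul continuous_id).add continuous_const)
  have hcont2 : Continuous (fun z : ℝ => Real.exp ((2/s)*z + (-2/s))) :=
    Real.continuous_exp.comp ((continuous_const.mul continuous_id).add continuous_const)
  have hi1 : IntervalIntegrable (fun z => Real.exp ((-2/s)*z + 0)) MeasureTheory.volume 0 1 :=
    hcont1.intervalIntegrable 0 1
  have hi2 : IntervalIntegrable (fun z => Real.exp ((2/s)*z + (-2/s))) MeasureTheory.volume 0 1 :=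
    hcont2.intervalIntegrable 0 1
  have hGint : IntervalIntegrable G MeasureTheory.volume 0 1 := by
    rw [hG]
    exact (continuous_const.mul ((hcont1.add hcont2).add continuous_const)).intervalIntegrable 0 1
  have hint1 : (∫ z in (0:ℝ)..1, (w z)^2) ≤ ∫ z in (0:ℝ)..1, G z :=
    intervalIntegral.integral_mono_on zero_le_one hwint hGint (fun z hz => hBG z hz)
  have hk1 : (-2/s : ℝ) < 0 := div_neg_of_neg_of_pos (by norm_num) hs
  have hk2 : (0:ℝ) < 2/s := by positivity
  have hGsplit : (∫ z in (0:ℝ)..1, G z) =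
      3*M^2*((∫ z in (0:ℝ)..1, Real.exp ((-2/s)*z + 0)) +
        (∫ z in (0:ℝ)..1, Real.exp ((2/s)*z + (-2/s))) + ε^2) := by
    rw [hG]
    rw [intervalIntegral.integral_const_mul]
    rw [intervalIntegral.integral_add (hi1.add hi2) (intervalIntegrable_const)]
    rw [intervalIntegral.integral_add hi1 hi2]
    simp
  have hI1 : (∫ z in (0:ℝ)..1, Real.exp ((-2/s)*z + 0)) ≤ s/2 := by
    rw [expAff_integral _ _ (ne_of_lt hk1)]
    rw [div_le_iff_of_neg hk1]
    have he : s/2 * (-2/s) = -1 := by field_simp; try ring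
    rw [he]
    have := Real.exp_pos ((-2/s) + 0)
    rw [Real.exp_zero]
    linarith
  have hI2 : (∫ z in (0:ℝ)..1, Real.exp ((2/s)*z + (-2/s))) ≤ s/2 := by
    rw [expAff_integral _ _ (ne_of_gt hk2)]
    rw [div_le_iff₀ hk2]
    have h0 : (2/s : ℝ) + -2/s = 0 := by ring
    rw [h0, Real.exp_zero]
    have he : s/2 * (2/s) = 1 := by field_simp; try ring
    rw [he]
    linarith [Real.exp_pos (-2/s : ℝ)]
  have hεs : ε ≤ s := by nlinarith
  have hGval : (∫ z in (0:ℝ)..1, G z) ≤ (3*M)^2 * s := by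
    rw [hGsplit]
    have hsum : (∫ z in (0:ℝ)..1, Real.exp ((-2/s)*z + 0)) +
        (∫ z in (0:ℝ)..1, Real.exp ((2/s)*z + (-2/s))) + ε^2 ≤ 2*s := by nlinarith
    nlinarith [mul_nonneg (mul_nonneg (by norm_num : (0:ℝ) ≤ 3) (sq_nonneg M)) hs.le,
      mul_le_mul_of_nonneg_left hsum (by positivity : (0:ℝ) ≤ 3*M^2)]
  have h1 : Real.sqrt (∫ z in (0:ℝ)..1, (w z)^2) ≤ Real.sqrt ((3*M)^2 * s) :=
    Real.sqrt_le_sqrt (hint1.trans hGval)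
  have h2 : Real.sqrt ((3*M)^2 * s) = (3*M) * Real.sqrt s := by
    rw [Real.sqrt_mul (sq_nonneg _), Real.sqrt_sq (by linarith : (0:ℝ) ≤ 3*M)]
  have h3 : Real.sqrt s = ε ^ ((1:ℝ)/4) := by
    rw [hsdef, Real.sqrt_eq_rpow, Real.sqrt_eq_rpow, ← Real.rpow_mul hε.le]
    norm_num
  calc Real.sqrt (∫ z in (0:ℝ)..1, (w z)^2) ≤ Real.sqrt ((3*M)^2 * s) := h1
    _ = 3*M * ε ^ ((1:ℝ)/4) := by rw [h2, h3]
end
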